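/- arXiv:2602.12180 — 9 statements merged into one kernel-verified Lean document; each statement's English description precedes it below -/
import Mathlib

section
/- Let K ≥ 2, let P be a preference matrix of size K, let μ ∈ Δ_K° be a full-support sampling distribution, let π_ref ∈ Δ_K° be a full-support reference policy, and let β > 0. Consider the function L on full-support distributions π ∈ Δ_K° defined by L(π) = Σ_{i,j=1}^K μ_i μ_j P_{ij} (log(π_i/π_{ref,i}) − log(π_j/π_{ref,j}) − β/2)². Then L attains a unique minimizer π* over Δ_K°, and it is given in closed form by π*_i = π_{ref,i} exp(β(Pμ)_i) / Σ_{k=1}^K π_{ref,k} exp(β(Pμ)_k) for every i, where (Pμ)_i = Σ_{k=1}^K P_{ik} μ_k. -/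
open Finset

/-- softmax of a vector of logits. -/
noncomputable def softmax {K : ℕ} (z : Fin K → ℝ) : Fin K → ℝ :=
  fun i => Real.exp (z i) / ∑ k, Real.exp (z k)

/-- A preference matrix: entries in [0,1], 1/2 on the diagonal, and `P i j + P j i = 1`. -/
def IsPrefMatrix {K : ℕ} (P : Matrix (Fin K) (Fin K) ℝ) : Prop :=
  (∀ i j, 0 ≤ P i j ∧ P i j ≤ 1) ∧ (∀ i, P i i = 1/2) ∧ ∀ i j, i ≠ j → P i j + P j i = 1

/-- Membership in the probability simplex Δ_K. -/
def InSimplex {K : ℕ} (μ : Fin K → ℝ) : Prop :=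
  (∀ i, 0 ≤ μ i) ∧ ∑ i, μ i = 1

/-- Membership in the interior Δ_K° of the probability simplex (full support). -/
def InSimplexInterior {K : ℕ} (μ : Fin K → ℝ) : Prop :=
  (∀ i, 0 < μ i) ∧ ∑ i, μ i = 1

lemma cross_zero {K : ℕ} (P : Matrix (Fin K) (Fin K) ℝ) (μ a d : Fin K → ℝ)
    (hd : ∀ i, d i = ∑ k, P i k * μ k)
    (hPsum : ∀ i j, P i j + P j i = 1) (hμ1 : ∑ i, μ i = 1) :
    ∑ i, ∑ j, μ i * μ j * P i j * ((a i - a j) * (d i - d j - 1/2)) = 0 := by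
  have hrow : ∀ i, ∑ j, P i j * μ j = d i := fun i => (hd i).symm
  have hcol : ∀ j, ∑ i, P i j * μ i = 1 - d j := by
    intro j
    have h1 : ∑ i, (P j i * μ i + P i j * μ i) = 1 := by
      rw [show (1:ℝ) = ∑ i, μ i from hμ1.symm]
      exact Finset.sum_congr rfl fun i _ => by rw [← add_mul, hPsum j i, one_mul]
    rw [Finset.sum_add_distrib, hrow j] at h1
    linarith
  have hS2 : ∑ i, μ i * d i = 1/2 := by
    have e1 : ∑ i, μ i * d i = ∑ i, ∑ j, P i j * (μ i * μ j) := by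
      refine Finset.sum_congr rfl fun i _ => ?_
      rw [hd i, Finset.mul_sum]
      exact Finset.sum_congr rfl fun j _ => by ring
    have e2 : ∑ i, μ i * (1 - d i) = ∑ i, ∑ j, P j i * (μ i * μ j) := by
      refine Finset.sum_congr rfl fun i _ => ?_
      rw [← hcol i, Finset.mul_sum]
      exact Finset.sum_congr rfl fun j _ => by ring
    have e3 : ∑ i, ∑ j, P i j * (μ i * μ j) = ∑ i, ∑ j, P j i * (μ i * μ j) := by
      rw [Finset.sum_comm]
      exact Finset.sum_congr rfl fun i _ => Finset.sum_congr rfl fun j _ => by ring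
    have e4 : ∑ i, (μ i * d i + μ i * (1 - d i)) = 1 := by
      rw [show ∑ i, (μ i * d i + μ i * (1 - d i)) = ∑ i, μ i from
        Finset.sum_congr rfl fun i _ => by ring, hμ1]
    rw [Finset.sum_add_distrib] at e4
    linarith
  have hcomm : ∑ i, ∑ j, μ i * μ j * P i j * ((a i - a j) * (d i - d j - 1/2))
      = ∑ i, ∑ j, μ j * μ i * P j i * ((a j - a i) * (d j - d i - 1/2)) := by
    rw [Finset.sum_comm]
  have key : ∀ i j : Fin K,
      μ i * μ j * P i j * ((a i - a j) * (d i - d j - 1/2))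
        + μ j * μ i * P j i * ((a j - a i) * (d j - d i - 1/2))
      = ((((μ i * a i * d i) * μ j - (μ i * a i) * (μ j * d j))
          - (μ i * d i) * (μ j * a j)) + μ i * (μ j * a j * d j))
        + ((((μ i * a i / 2) * (P j i * μ j) - (μ i * a i / 2) * (P i j * μ j))
          - (μ j * a j / 2) * (P j i * μ i)) + (μ j * a j / 2) * (P i j * μ i)) := by
    intro i j
    linear_combination (μ i * μ j * (a i - a j) * (d i - d j)) * hPsum i j
  -- evaluate the eight double sums
  have E1 : ∑ i, ∑ j, (μ i * a i * d i) * μ j = ∑ i, μ i * a i * d i := by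
    refine Finset.sum_congr rfl fun i _ => ?_
    rw [← Finset.mul_sum, hμ1, mul_one]
  have E2 : ∑ i, ∑ j, (μ i * a i) * (μ j * d j) = (∑ i, μ i * a i) * (1/2) := by
    have : ∀ i : Fin K, ∑ j, (μ i * a i) * (μ j * d j) = (μ i * a i) * (1/2) := by
      intro i; rw [← Finset.mul_sum, hS2]
    rw [Finset.sum_congr rfl fun i _ => this i, ← Finset.sum_mul]
  have E3 : ∑ i, ∑ j, (μ i * d i) * (μ j * a j) = (1/2) * (∑ i, μ i * a i) := by
    have : ∀ i : Fin K, ∑ j, (μ i * d i) * (μ j * a j) = (μ i * d i) * (∑ j, μ j * a j) := by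
      intro i; rw [← Finset.mul_sum]
    rw [Finset.sum_congr rfl fun i _ => this i, ← Finset.sum_mul, hS2]
  have E4 : ∑ i, ∑ j, μ i * (μ j * a j * d j) = ∑ j, μ j * a j * d j := by
    have : ∀ i : Fin K, ∑ j, μ i * (μ j * a j * d j) = μ i * (∑ j, μ j * a j * d j) := by
      intro i; rw [← Finset.mul_sum]
    rw [Finset.sum_congr rfl fun i _ => this i, ← Finset.sum_mul, hμ1, one_mul]
  have E5 : ∑ i, ∑ j, (μ i * a i / 2) * (P j i * μ j) = ∑ i, (μ i * a i / 2) * (1 - d i) := by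
    refine Finset.sum_congr rfl fun i _ => ?_
    rw [← Finset.mul_sum, hcol i]
  have E6 : ∑ i, ∑ j, (μ i * a i / 2) * (P i j * μ j) = ∑ i, (μ i * a i / 2) * d i := by
    refine Finset.sum_congr rfl fun i _ => ?_
    rw [← Finset.mul_sum, hrow i]
  have E7 : ∑ i, ∑ j, (μ j * a j / 2) * (P j i * μ i) = ∑ j, (μ j * a j / 2) * d j := by
    rw [Finset.sum_comm]
    refine Finset.sum_congr rfl fun j _ => ?_
    rw [← Finset.mul_sum, hrow j]
  have E8 : ∑ i, ∑ j, (μ j * a j / 2) * (P i j * μ i) = ∑ j, (μ j * a j / 2) * (1 - d j) := by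
    rw [Finset.sum_comm]
    refine Finset.sum_congr rfl fun j _ => ?_
    rw [← Finset.mul_sum, hcol j]
  have F5 : ∑ i, (μ i * a i / 2) * (1 - d i)
      = (∑ i, μ i * a i) * (1/2) - (∑ i, μ i * a i * d i) * (1/2) := by
    rw [show ∑ i, (μ i * a i / 2) * (1 - d i)
        = ∑ i, (μ i * a i * (1/2) - μ i * a i * d i * (1/2)) from
      Finset.sum_congr rfl fun i _ => by ring]
    rw [Finset.sum_sub_distrib, Finset.sum_mul, Finset.sum_mul]
  have F6 : ∑ i, (μ i * a i / 2) * d i = (∑ i, μ i * a i * d i) * (1/2) := by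
    rw [show ∑ i, (μ i * a i / 2) * d i = ∑ i, (μ i * a i * d i) * (1/2) from
      Finset.sum_congr rfl fun i _ => by ring]
    rw [Finset.sum_mul]
  have total : (∑ i, ∑ j, μ i * μ j * P i j * ((a i - a j) * (d i - d j - 1/2)))
      + ∑ i, ∑ j, μ j * μ i * P j i * ((a j - a i) * (d j - d i - 1/2)) = 0 := by
    rw [← Finset.sum_add_distrib]
    rw [show (∑ i, ((∑ j, μ i * μ j * P i j * ((a i - a j) * (d i - d j - 1/2)))
        + ∑ j, μ j * μ i * P j i * ((a j - a i) * (d j - d i - 1/2))))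
      = ∑ i, ∑ j, (μ i * μ j * P i j * ((a i - a j) * (d i - d j - 1/2))
        + μ j * μ i * P j i * ((a j - a i) * (d j - d i - 1/2))) from
      Finset.sum_congr rfl fun i _ => (Finset.sum_add_distrib).symm]
    simp only [key]
    simp only [Finset.sum_add_distrib, Finset.sum_sub_distrib]
    rw [E1, E2, E3, E4, E5, E6, E7, E8, F5, F6]
    ring
  linarith [hcomm, total]

/-- The population IPO objective has a unique minimizer over the interior of the
simplex, given in closed form by `π* ∝ π_ref ⊙ exp(β P μ)`. -/
theorem ipo_unique_minimizer_closed_form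
    (K : ℕ) (hK : 2 ≤ K)
    (P : Matrix (Fin K) (Fin K) ℝ) (hP : IsPrefMatrix P)
    (μ πref : Fin K → ℝ)
    (hμ : InSimplexInterior μ) (href : InSimplexInterior πref)
    (β : ℝ) (hβ : 0 < β)
    (L : (Fin K → ℝ) → ℝ)
    (hL : ∀ π : Fin K → ℝ,
      L π = ∑ i, ∑ j, μ i * μ j * P i j *
        (Real.log (π i / πref i) - Real.log (π j / πref j) - β / 2) ^ 2)
    (πstar : Fin K → ℝ)
    (hstar : ∀ i, πstar i =
      πref i * Real.exp (β * ∑ k, P i k * μ k) /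
        ∑ k, πref k * Real.exp (β * ∑ l, P k l * μ l)) :
    InSimplexInterior πstar ∧
    (∀ π, InSimplexInterior π → L πstar ≤ L π) ∧
    (∀ π, InSimplexInterior π → L π = L πstar → π = πstar) := by
  obtain ⟨hPrange, hPdiag, hPoff⟩ := hP
  have hPsum : ∀ i j, P i j + P j i = 1 := by
    intro i j
    rcases eq_or_ne i j with rfl | h
    · rw [hPdiag i]; norm_num
    · exact hPoff i j h
  have hKpos : 0 < K := by omega
  obtain ⟨d, hd⟩ : ∃ d : Fin K → ℝ, ∀ i, d i = ∑ k, P i k * μ k := ⟨_, fun _ => rfl⟩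
  obtain ⟨Z, hZ⟩ : ∃ Z : ℝ, Z = ∑ k, πref k * Real.exp (β * d k) := ⟨_, rfl⟩
  have hstar' : ∀ i, πstar i = πref i * Real.exp (β * d i) / Z := by
    intro i
    rw [hstar i, hZ]
    simp only [hd]
  have hZpos : 0 < Z := by
    rw [hZ]
    exact Finset.sum_pos (fun k _ => mul_pos (href.1 k) (Real.exp_pos _))
      ⟨⟨0, hKpos⟩, Finset.mem_univ _⟩
  have hstarpos : ∀ i, 0 < πstar i := fun i => by
    rw [hstar' i]
    exact div_pos (mul_pos (href.1 i) (Real.exp_pos _)) hZpos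
  have hstarsum : ∑ i, πstar i = 1 := by
    rw [show ∑ i, πstar i = (∑ i, πref i * Real.exp (β * d i)) / Z from by
      rw [Finset.sum_div]; exact Finset.sum_congr rfl fun i _ => hstar' i]
    rw [← hZ, div_self hZpos.ne']
  have hIS : InSimplexInterior πstar := ⟨hstarpos, hstarsum⟩
  have hlogstar : ∀ i, Real.log (πstar i / πref i) = β * d i - Real.log Z := by
    intro i
    rw [hstar' i,
      show πref i * Real.exp (β * d i) / Z / πref i = Real.exp (β * d i) / Z from by
        rw [div_right_comm, mul_div_cancel_left₀ _ (href.1 i).ne'],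
      Real.log_div (Real.exp_pos _).ne' hZpos.ne', Real.log_exp]
  -- main decomposition for any interior π
  have main : ∀ π, InSimplexInterior π →
      ∃ a : Fin K → ℝ, (∀ i, π i = πstar i * Real.exp (a i)) ∧
        L π = L πstar + ∑ i, ∑ j, μ i * μ j * P i j * (a i - a j) ^ 2 := by
    intro π hπ
    obtain ⟨a, ha⟩ : ∃ a : Fin K → ℝ, ∀ i, a i = Real.log (π i) - Real.log (πstar i) :=
      ⟨_, fun _ => rfl⟩
    have hπi : ∀ i, π i = πstar i * Real.exp (a i) := by
      intro i
      rw [ha i, Real.exp_sub, Real.exp_log (hπ.1 i), Real.exp_log (hstarpos i),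
        mul_comm, div_mul_cancel₀ _ (hstarpos i).ne']
    have hterm : ∀ i, Real.log (π i / πref i) = a i + (β * d i - Real.log Z) := by
      intro i
      rw [Real.log_div (hπ.1 i).ne' (href.1 i).ne', ← hlogstar i,
        Real.log_div (hstarpos i).ne' (href.1 i).ne', ha i]
      ring
    refine ⟨a, hπi, ?_⟩
    rw [hL π, hL πstar]
    have expand : ∀ i j, μ i * μ j * P i j *
        (Real.log (π i / πref i) - Real.log (π j / πref j) - β / 2) ^ 2
        = μ i * μ j * P i j *
            (Real.log (πstar i / πref i) - Real.log (πstar j / πref j) - β / 2) ^ 2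
          + μ i * μ j * P i j * (a i - a j) ^ 2
          + (2 * β) * (μ i * μ j * P i j * ((a i - a j) * (d i - d j - 1/2))) := by
      intro i j
      rw [hterm i, hterm j, hlogstar i, hlogstar j]
      ring
    simp only [expand]
    simp only [Finset.sum_add_distrib]
    rw [show ∑ i, ∑ j, (2 * β) * (μ i * μ j * P i j * ((a i - a j) * (d i - d j - 1/2)))
        = (2 * β) * ∑ i, ∑ j, μ i * μ j * P i j * ((a i - a j) * (d i - d j - 1/2)) from by
      rw [Finset.mul_sum]
      exact Finset.sum_congr rfl fun i _ => (Finset.mul_sum _ _ _).symm]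
    rw [cross_zero P μ a d hd hPsum hμ.2, mul_zero, add_zero]
  refine ⟨hIS, ?_, ?_⟩
  · intro π hπ
    obtain ⟨a, -, hdec⟩ := main π hπ
    have hQ : 0 ≤ ∑ i, ∑ j, μ i * μ j * P i j * (a i - a j) ^ 2 :=
      Finset.sum_nonneg fun i _ => Finset.sum_nonneg fun j _ =>
        mul_nonneg (mul_nonneg (mul_nonneg (hμ.1 i).le (hμ.1 j).le) (hPrange i j).1)
          (sq_nonneg _)
    linarith [hdec]
  · intro π hπ hLeq
    obtain ⟨a, hπi, hdec⟩ := main π hπ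
    have hQ0 : ∑ i, ∑ j, μ i * μ j * P i j * (a i - a j) ^ 2 = 0 := by linarith [hdec]
    have hterm0 : ∀ i ∈ (univ : Finset (Fin K)), ∀ j ∈ (univ : Finset (Fin K)),
        μ i * μ j * P i j * (a i - a j) ^ 2 = 0 := by
      have h1 := (Finset.sum_eq_zero_iff_of_nonneg (fun i _ =>
        Finset.sum_nonneg fun j _ =>
          mul_nonneg (mul_nonneg (mul_nonneg (hμ.1 i).le (hμ.1 j).le) (hPrange i j).1)
            (sq_nonneg _))).mp hQ0
      intro i hi j hj
      exact (Finset.sum_eq_zero_iff_of_nonneg (fun j _ =>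
        mul_nonneg (mul_nonneg (mul_nonneg (hμ.1 i).le (hμ.1 j).le) (hPrange i j).1)
          (sq_nonneg _))).mp (h1 i hi) j hj
    have hc : ∀ i j, a i = a j := by
      intro i j
      have h1 := hterm0 i (mem_univ _) j (mem_univ _)
      have h2 := hterm0 j (mem_univ _) i (mem_univ _)
      have hne : μ i * μ j ≠ 0 := (mul_pos (hμ.1 i) (hμ.1 j)).ne'
      have e1 : P i j * (a i - a j) ^ 2 = 0 := by
        have h3 : μ i * μ j * (P i j * (a i - a j) ^ 2) = 0 := by linear_combination h1
        exact (mul_eq_zero.mp h3).resolve_left hne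
      have e2 : P j i * (a j - a i) ^ 2 = 0 := by
        have hne' : μ j * μ i ≠ 0 := (mul_pos (hμ.1 j) (hμ.1 i)).ne'
        have h3 : μ j * μ i * (P j i * (a j - a i) ^ 2) = 0 := by linear_combination h2
        exact (mul_eq_zero.mp h3).resolve_left hne'
      have hsq : (a i - a j) ^ 2 = 0 := by
        linear_combination e1 + e2 - (a i - a j) ^ 2 * hPsum i j
      have := pow_eq_zero_iff (n := 2) (by norm_num) |>.mp hsq
      linarith [this]
    have hexp1 : Real.exp (a ⟨0, hKpos⟩) = 1 := by
      have hsum' : ∑ i, πstar i * Real.exp (a ⟨0, hKpos⟩) = 1 := by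
        rw [← hπ.2]
        refine Finset.sum_congr rfl fun i _ => ?_
        rw [hπi i, ← hc i ⟨0, hKpos⟩]
      rw [← Finset.sum_mul, hstarsum, one_mul] at hsum'
      exact hsum'
    funext i
    rw [hπi i, hc i ⟨0, hKpos⟩, hexp1, mul_one]
end

section
/- Fix K = 3 and β > 0, and take the uniform reference policy so that the IPO solution is π*(P;μ) = softmax(βPμ). For every full-support sampling distribution μ ∈ Δ_3° there exists a 3×3 preference matrix P that is transitive with order 1 ≻ 2 ≻ 3 (in particular P_{1j} > 1/2 for j = 2,3, so response 1 is the Condorcet winner and {1} is the Smith set), yet the IPO solution satisfies π*(P;μ)_2 > π*(P;μ)_1. Consequently, for no fixed sampling distribution μ is the IPO aggregation rule F_μ(P) = softmax(βPμ) Condorcet-top, Smith-top, or order-preserving. -/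
open Finset

lemma softmax_lt {K : ℕ} (z : Fin K → ℝ) (i j : Fin K) (h : z i < z j) :
    softmax z i < softmax z j := by
  have hsum : 0 < ∑ k, Real.exp (z k) := by
    apply Finset.sum_pos (fun k _ => Real.exp_pos _)
    exact ⟨i, Finset.mem_univ i⟩
  exact (div_lt_div_iff_of_pos_right hsum).2 (Real.exp_lt_exp.2 h)

/-- For K = 3 and any fixed full-support sampling distribution μ, there is a
transitive preference matrix with Condorcet winner 1 (index 0) for which the IPO solution
`F_μ(P) = softmax(βPμ)` ranks response 2 (index 1) strictly above response 1 (index 0).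
Consequently the rule `F_μ` is not Condorcet-top, not Smith-top, and not order-preserving. -/
theorem ipo_fixed_sampling_violates_axioms
    (β : ℝ) (hβ : 0 < β)
    (μ : Fin 3 → ℝ) (hμ : InSimplexInterior μ)
    (F : Matrix (Fin 3) (Fin 3) ℝ → Fin 3 → ℝ)
    (hF : ∀ P, F P = softmax (fun i => β * ∑ k, P i k * μ k)) :
    (∃ P : Matrix (Fin 3) (Fin 3) ℝ, IsPrefMatrix P ∧
      (∀ i j : Fin 3, i < j → (1:ℝ)/2 ≤ P i j) ∧
      (∀ j : Fin 3, j ≠ 0 → (1:ℝ)/2 < P 0 j) ∧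
      F P 0 < F P 1) ∧
    -- F_μ is not Condorcet-top
    ¬ (∀ P : Matrix (Fin 3) (Fin 3) ℝ, IsPrefMatrix P →
        ∀ c : Fin 3, (∀ j, j ≠ c → (1:ℝ)/2 < P c j) → ∀ j, j ≠ c → F P j < F P c) ∧
    -- F_μ is not Smith-top
    ¬ (∀ P : Matrix (Fin 3) (Fin 3) ℝ, IsPrefMatrix P →
        ∀ S : Finset (Fin 3),
          (S.Nonempty ∧ ∀ i ∈ S, ∀ j ∉ S, (1:ℝ)/2 < P i j) →
          (∀ S' : Finset (Fin 3),
            (S'.Nonempty ∧ ∀ i ∈ S', ∀ j ∉ S', (1:ℝ)/2 < P i j) → S ⊆ S') →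
          ∀ i ∈ S, ∀ j ∉ S, F P j < F P i) ∧
    -- F_μ is not order-preserving
    ¬ (∀ P : Matrix (Fin 3) (Fin 3) ℝ, IsPrefMatrix P →
        (∀ i j : Fin 3, i < j → (1:ℝ)/2 ≤ P i j) →
        ∀ i j : Fin 3, i ≤ j → F P j ≤ F P i) := by
  obtain ⟨hpos, hsum⟩ := hμ
  have h0 := hpos 0
  have h1 := hpos 1
  have h2 := hpos 2
  have hsum3 : μ 0 + μ 1 + μ 2 = 1 := by
    rw [Fin.sum_univ_three] at hsum; linarith
  set ε : ℝ := μ 2 / 4 with hε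
  have hε0 : 0 < ε := by positivity
  have hε4 : ε ≤ 1/4 := by rw [hε]; linarith
  set P : Matrix (Fin 3) (Fin 3) ℝ :=
    !![1/2, 1/2 + ε, 1/2 + ε; 1/2 - ε, 1/2, 1; 1/2 - ε, 0, 1/2] with hP
  have hPref : IsPrefMatrix P := by
    refine ⟨?_, ?_, ?_⟩
    · intro i j; fin_cases i <;> fin_cases j <;>
        simp [hP, Matrix.cons_val_zero, Matrix.cons_val_one, Matrix.head_cons, Matrix.cons_val_two, Matrix.tail_cons, Matrix.head_fin_const, Matrix.vecHead, Matrix.vecTail] <;> (try constructor) <;> linarith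
    · intro i; fin_cases i <;> simp [hP, Matrix.cons_val_zero, Matrix.cons_val_one, Matrix.head_cons, Matrix.cons_val_two, Matrix.tail_cons, Matrix.head_fin_const, Matrix.vecHead, Matrix.vecTail]
    · intro i j hij; fin_cases i <;> fin_cases j <;> simp_all [hP, Matrix.cons_val_zero, Matrix.cons_val_one, Matrix.head_cons, Matrix.cons_val_two, Matrix.tail_cons, Matrix.head_fin_const, Matrix.vecHead, Matrix.vecTail] <;> ring
  have htrans : ∀ i j : Fin 3, i < j → (1:ℝ)/2 ≤ P i j := by
    intro i j hij; fin_cases i <;> fin_cases j <;>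
      simp_all [hP, Matrix.cons_val_zero, Matrix.cons_val_one, Matrix.head_cons, Matrix.cons_val_two, Matrix.tail_cons, Matrix.head_fin_const, Matrix.vecHead, Matrix.vecTail] <;> linarith [hpos 2]
  have hcond : ∀ j : Fin 3, j ≠ 0 → (1:ℝ)/2 < P 0 j := by
    intro j hj; fin_cases j
    · exact absurd rfl hj
    · simp [hP, Matrix.cons_val_zero, Matrix.cons_val_one, Matrix.head_cons, Matrix.cons_val_two, Matrix.tail_cons, Matrix.head_fin_const, Matrix.vecHead, Matrix.vecTail]; linarith
    · simp [hP, Matrix.cons_val_zero, Matrix.cons_val_one, Matrix.head_cons, Matrix.cons_val_two, Matrix.tail_cons, Matrix.head_fin_const, Matrix.vecHead, Matrix.vecTail]; linarith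
  have hkey : F P 0 < F P 1 := by
    rw [hF]
    apply softmax_lt
    have e0 : (∑ k, P 0 k * μ k) = 1/2 * μ 0 + (1/2 + ε) * μ 1 + (1/2 + ε) * μ 2 := by
      rw [Fin.sum_univ_three]; simp [hP, Matrix.cons_val_zero, Matrix.cons_val_one, Matrix.head_cons, Matrix.cons_val_two, Matrix.tail_cons, Matrix.head_fin_const, Matrix.vecHead, Matrix.vecTail]
    have e1 : (∑ k, P 1 k * μ k) = (1/2 - ε) * μ 0 + 1/2 * μ 1 + 1 * μ 2 := by
      rw [Fin.sum_univ_three]; simp [hP, Matrix.cons_val_zero, Matrix.cons_val_one, Matrix.head_cons, Matrix.cons_val_two, Matrix.tail_cons, Matrix.head_fin_const, Matrix.vecHead, Matrix.vecTail]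
    simp only [e0, e1]
    apply mul_lt_mul_of_pos_left _ hβ
    rw [hε]; nlinarith
  refine ⟨⟨P, hPref, htrans, hcond, hkey⟩, ?_, ?_, ?_⟩
  · intro h
    exact absurd (h P hPref 0 hcond 1 (by decide)) (not_lt.2 (le_of_lt hkey))
  · intro h
    have hS : ({0} : Finset (Fin 3)).Nonempty ∧
        ∀ i ∈ ({0} : Finset (Fin 3)), ∀ j ∉ ({0} : Finset (Fin 3)), (1:ℝ)/2 < P i j := by
      refine ⟨⟨0, Finset.mem_singleton_self 0⟩, ?_⟩
      intro i hi j hj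
      rw [Finset.mem_singleton] at hi
      subst hi
      exact hcond j (by simpa using hj)
    have hmin : ∀ S' : Finset (Fin 3),
        (S'.Nonempty ∧ ∀ i ∈ S', ∀ j ∉ S', (1:ℝ)/2 < P i j) → ({0} : Finset (Fin 3)) ⊆ S' := by
      intro S' ⟨⟨i, hi⟩, hdom⟩
      intro x hx
      rw [Finset.mem_singleton] at hx; subst hx
      by_contra h0S
      have hi0 : i ≠ 0 := fun h => h0S (h ▸ hi)
      have := hdom i hi 0 h0S
      have h2' := hcond i hi0
      have hc := hPref.2.2 0 i (Ne.symm hi0)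
      linarith
    have := h P hPref {0} hS hmin 0 (Finset.mem_singleton_self 0) 1 (by decide)
    linarith
  · intro h
    have := h P hPref htrans 0 1 (by decide)
    linarith
end

section
/- Let K ≥ 2, β > 0, and let P be a preference matrix of size K admitting a Condorcet winner c, i.e., P_{cj} > 1/2 for all j ≠ c. Then there exists a full-support sampling distribution μ ∈ Δ_K° such that the IPO solution with uniform reference, π* = softmax(βPμ), assigns c the unique highest probability: π*_c > π*_j for all j ≠ c. -/
open Finset

/-- If `P` admits a Condorcet winner `c`, then some full-support sampling
distribution makes the IPO solution (with uniform reference) assign `c` the unique highest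
probability. -/
theorem condorcet_winner_top_for_some_sampling
    (K : ℕ) (hK : 2 ≤ K) (β : ℝ) (hβ : 0 < β)
    (P : Matrix (Fin K) (Fin K) ℝ) (hP : IsPrefMatrix P)
    (c : Fin K) (hc : ∀ j, j ≠ c → (1:ℝ)/2 < P c j) :
    ∃ μ : Fin K → ℝ, InSimplexInterior μ ∧
      ∀ j, j ≠ c →
        softmax (fun i => β * ∑ k, P i k * μ k) j
          < softmax (fun i => β * ∑ k, P i k * μ k) c := by
  obtain ⟨hP01, hPd, hPs⟩ := hP
  have hKR : (0:ℝ) < (K:ℝ) := by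
    have : (0:ℕ) < K := by omega
    exact_mod_cast this
  have hne : (univ.erase c).Nonempty := by
    have : Nontrivial (Fin K) := Fin.nontrivial_iff_two_le.mpr hK
    obtain ⟨j, hj⟩ := exists_ne c
    exact ⟨j, mem_erase.mpr ⟨hj, mem_univ j⟩⟩
  set δ := (univ.erase c).inf' hne (fun j => P c j - 1/2) with hδdef
  have hδpos : 0 < δ := by
    rw [hδdef, Finset.lt_inf'_iff]
    intro j hj
    have := hc j (mem_erase.mp hj).1
    linarith
  have hδle : δ ≤ 1/2 := by
    obtain ⟨j, hj⟩ := hne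
    have h1 : δ ≤ P c j - 1/2 := Finset.inf'_le _ hj
    have := (hP01 c j).2
    linarith
  set ε := δ / (4 * K) with hεdef
  have hεpos : 0 < ε := by positivity
  have hKε : (K:ℝ) * ε = δ/4 := by
    rw [hεdef]; field_simp
  set μ : Fin K → ℝ := fun i => ε + if i = c then 1 - K*ε else 0 with hμ
  have hμsum : ∀ i, ∑ k, P i k * μ k = ε * ∑ k, P i k + (1 - K*ε) * P i c := by
    intro i
    rw [hμ]
    simp only [mul_add, Finset.sum_add_distrib, mul_ite, mul_zero]
    rw [Finset.sum_ite_eq' univ c (fun k => P i k * (1 - K*ε)), if_pos (mem_univ c)]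
    rw [← Finset.sum_mul]
    ring
  have hPc : ∀ j, j ≠ c → P j c ≤ 1/2 - δ := by
    intro j hj
    have h1 : δ ≤ P c j - 1/2 := Finset.inf'_le _ (mem_erase.mpr ⟨hj, mem_univ j⟩)
    have h2 := hPs j c hj
    linarith
  have hsumle : ∀ i, ∑ k, P i k ≤ K := by
    intro i
    calc ∑ k, P i k ≤ ∑ _k : Fin K, (1:ℝ) :=
          Finset.sum_le_sum (fun k _ => (hP01 i k).2)
      _ = K := by simp
  have hsumge : ∀ i, (0:ℝ) ≤ ∑ k, P i k :=
    fun i => Finset.sum_nonneg (fun k _ => (hP01 i k).1)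
  have key : ∀ j, j ≠ c → ∑ k, P j k * μ k < ∑ k, P c k * μ k := by
    intro j hj
    rw [hμsum j, hμsum c, hPd c, hKε]
    have h1 : ε * ∑ k, P j k ≤ ε * K := by
      have := hsumle j; nlinarith
    have h2 : (0:ℝ) ≤ ε * ∑ k, P c k := by
      have := hsumge c; positivity
    have h3 := hPc j hj
    have h4 : (1 - δ/4) * P j c ≤ (1 - δ/4) * (1/2 - δ) := by nlinarith
    nlinarith
  refine ⟨μ, ⟨?_, ?_⟩, ?_⟩
  · intro i
    rw [hμ]
    by_cases h : i = c <;> simp [h] <;> nlinarith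
  · rw [hμ]
    rw [Finset.sum_add_distrib, Finset.sum_ite_eq' univ c (fun _ => 1 - (K:ℝ)*ε),
      if_pos (mem_univ c)]
    simp [Finset.card_univ]
  · intro j hj
    have hD : 0 < ∑ k, Real.exp (β * ∑ k2, P k k2 * μ k2) :=
      Finset.sum_pos (fun k _ => Real.exp_pos _) ⟨c, mem_univ c⟩
    unfold softmax
    have hz : β * ∑ k, P j k * μ k < β * ∑ k, P c k * μ k :=
      mul_lt_mul_of_pos_left (key j hj) hβ
    exact (div_lt_div_iff_of_pos_right hD).mpr (Real.exp_lt_exp.mpr hz)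
end

section
/- For every K > 2 and every β > 0 there exists a transitive K×K preference matrix P with order 1 ≻ 2 ≻ ⋯ ≻ K such that for every i ∈ {1,…,K−1} there exists a full-support sampling distribution μ ∈ Δ_K° for which the IPO solution with uniform reference, π* = softmax(βPμ), ranks response 1 in the i-th position: exactly i−1 indices j ≠ 1 satisfy π*_j > π*_1. -/
open scoped Classical
open Finset

noncomputable def Pdm (K : ℕ) : Matrix (Fin K) (Fin K) ℝ :=
  fun l k => if l = k then 1/2 else if (l:ℕ) = 0 then 3/4
    else if (k:ℕ) = 0 then 1/4 else if l < k then 1 else 0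

lemma Pdm_pref (K : ℕ) : (∀ i j, 0 ≤ Pdm K i j ∧ Pdm K i j ≤ 1) ∧
    (∀ i, Pdm K i i = 1/2) ∧ ∀ i j, i ≠ j → Pdm K i j + Pdm K j i = 1 := by
  refine ⟨fun i j => ?_, fun i => by simp [Pdm], fun i j hij => ?_⟩
  · unfold Pdm; split_ifs <;> norm_num
  · have hji : j ≠ i := hij.symm
    have htri := lt_or_gt_of_ne hij
    unfold Pdm
    rw [if_neg hij, if_neg hji]
    rcases Nat.eq_zero_or_pos (i:ℕ) with hi0 | hi0
    · have hj0 : (j:ℕ) ≠ 0 := fun h => hij (Fin.ext (by omega))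
      rw [if_pos hi0, if_neg hj0, if_pos hi0]; norm_num
    · have hi0' : (i:ℕ) ≠ 0 := by omega
      rcases Nat.eq_zero_or_pos (j:ℕ) with hj0 | hj0
      · rw [if_neg hi0', if_pos hj0, if_pos hj0]; norm_num
      · have hj0' : (j:ℕ) ≠ 0 := by omega
        rw [if_neg hi0', if_neg hj0', if_neg hj0', if_neg hi0']
        rcases htri with h | h
        · rw [if_pos h, if_neg (not_lt.mpr h.le)]; norm_num
        · rw [if_neg (not_lt.mpr h.le), if_pos h]; norm_num

lemma Pdm_trans (K : ℕ) : ∀ i j : Fin K, i < j → (1:ℝ)/2 ≤ Pdm K i j := by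
  intro i j hij
  have hne : i ≠ j := ne_of_lt hij
  unfold Pdm
  rw [if_neg hne]
  rcases Nat.eq_zero_or_pos (i:ℕ) with hi0 | hi0
  · rw [if_pos hi0]; norm_num
  · have hi0' : (i:ℕ) ≠ 0 := by omega
    have hj0' : (j:ℕ) ≠ 0 := by
      have : (i:ℕ) < (j:ℕ) := hij
      omega
    rw [if_neg hi0', if_neg hj0', if_pos hij]; norm_num


noncomputable def μdm (K i : ℕ) (hiK : i < K) : Fin K → ℝ :=
  fun k => if k = ⟨i, hiK⟩ then 1 - ((K:ℝ)-1) * (1/(8*K)) else 1/(8*K)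

lemma eps_bound (K : ℕ) (hK : 2 < K) : ((K:ℝ)-1) * (1/(8*K)) ≤ 1/8 := by
  have hK0 : (0:ℝ) < K := by exact_mod_cast (by omega : 0 < K)
  rw [mul_one_div, div_le_div_iff₀ (by positivity) (by norm_num)]
  linarith

lemma cast_K_sub_one (K : ℕ) (hK : 2 < K) : ((K - 1 : ℕ) : ℝ) = (K:ℝ) - 1 := by
  have : 1 ≤ K := by omega
  push_cast [this]; ring

lemma μdm_simplex (K i : ℕ) (hK : 2 < K) (hiK : i < K) :
    (∀ k, 0 < μdm K i hiK k) ∧ ∑ k, μdm K i hiK k = 1 := by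
  have hK0 : (0:ℝ) < K := by exact_mod_cast (by omega : 0 < K)
  have hb := eps_bound K hK
  constructor
  · intro k
    unfold μdm
    split_ifs
    · linarith
    · positivity
  · have hm : (⟨i, hiK⟩ : Fin K) ∈ Finset.univ := Finset.mem_univ _
    rw [← Finset.add_sum_erase _ _ hm]
    have h1 : μdm K i hiK ⟨i, hiK⟩ = 1 - ((K:ℝ)-1) * (1/(8*K)) := by
      unfold μdm; rw [if_pos rfl]
    have h2 : ∀ k ∈ Finset.univ.erase (⟨i, hiK⟩ : Fin K), μdm K i hiK k = 1/(8*(K:ℝ)) := by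
      intro k hk
      rw [Finset.mem_erase] at hk
      unfold μdm; rw [if_neg hk.1]
    rw [h1, Finset.sum_congr rfl h2, Finset.sum_const, Finset.card_erase_of_mem hm,
      Finset.card_univ, Fintype.card_fin, nsmul_eq_mul, cast_K_sub_one K hK]
    ring

lemma key_iff (K i : ℕ) (hK : 2 < K) (hi1 : 1 ≤ i) (hiK : i < K) (j : Fin K)
    (hj : (j:ℕ) ≠ 0) :
    (∑ k, Pdm K (⟨0, by omega⟩ : Fin K) k * μdm K i hiK k
      < ∑ k, Pdm K j k * μdm K i hiK k) ↔ (j:ℕ) < i := by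
  have hK0 : (0:ℝ) < K := by exact_mod_cast (by omega : 0 < K)
  have hb := eps_bound K hK
  have hε : 0 < 1/(8*(K:ℝ)) := by positivity
  set z : Fin K := ⟨0, by omega⟩ with hz
  set m : Fin K := ⟨i, hiK⟩ with hm
  set μ := μdm K i hiK with hμ
  have hzv : (z:ℕ) = 0 := rfl
  have hmv : (m:ℕ) = i := rfl
  have hμm : μ m = 1 - ((K:ℝ)-1) * (1/(8*K)) := by
    rw [hμ]; unfold μdm; rw [if_pos hm.symm]
  have hμk : ∀ k : Fin K, k ≠ m → μ k = 1/(8*(K:ℝ)) := by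
    intro k hk
    rw [hμ]; unfold μdm; rw [if_neg (by rw [← hm]; exact hk)]
  set w : Fin K → ℝ := fun k => if (k:ℕ) = 0 ∨ k = j then -1 else if j < k then 1 else -3
    with hwdef
  have hzj : z ≠ j := by intro h; exact hj (by rw [← h])
  have hjz : j ≠ z := by intro h; exact hj (by rw [h])
  have hw : ∀ k, 4 * (Pdm K j k - Pdm K z k) = w k := by
    intro k
    rcases Nat.eq_zero_or_pos (k:ℕ) with hk0 | hk0
    · have hkz : k = z := Fin.ext (by rw [hk0, hzv])
      have hjk : j ≠ k := by rw [hkz]; exact hjz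
      simp only [hwdef]
      rw [if_pos (Or.inl hk0)]
      unfold Pdm
      rw [if_neg hjk, if_neg hj, if_pos hk0, if_pos hzv, hkz, if_pos rfl]
      norm_num
    · have hk0' : (k:ℕ) ≠ 0 := by omega
      have hzk : z ≠ k := by intro h; exact hk0' (by rw [← h])
      by_cases hkj : k = j
      · simp only [hwdef]
        rw [if_pos (Or.inr hkj)]
        unfold Pdm
        rw [hkj, if_pos rfl, if_neg hzj, if_pos hzv]
        norm_num
      · have hjk : j ≠ k := fun h => hkj h.symm
        simp only [hwdef]
        rw [if_neg (by push_neg; exact ⟨hk0', hkj⟩)]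
        unfold Pdm
        rw [if_neg hjk, if_neg hj, if_neg hk0', if_neg hzk, if_pos hzv]
        by_cases hlt : j < k
        · rw [if_pos hlt, if_pos hlt]; norm_num
        · rw [if_neg hlt, if_neg hlt]; norm_num
  have hD : (4:ℝ) * ((∑ k, Pdm K j k * μ k) - ∑ k, Pdm K z k * μ k) = ∑ k, w k * μ k := by
    rw [← Finset.sum_sub_distrib, Finset.mul_sum]
    refine Finset.sum_congr rfl fun k _ => ?_
    rw [← hw k]; ring
  have hmm : m ∈ Finset.univ := Finset.mem_univ _
  have hsplit : ∑ k, w k * μ k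
      = w m * μ m + ∑ k ∈ Finset.univ.erase m, w k * (1/(8*(K:ℝ))) := by
    rw [← Finset.add_sum_erase _ _ hmm]
    congr 1
    exact Finset.sum_congr rfl fun k hk => by
      rw [hμk k (Finset.mem_erase.mp hk).1]
  have hcard : (Finset.univ.erase m).card = K - 1 := by
    rw [Finset.card_erase_of_mem hmm, Finset.card_univ, Fintype.card_fin]
  have hm0 : (m:ℕ) ≠ 0 := by rw [hmv]; omega
  constructor
  · intro hlt
    by_contra hge
    push_neg at hge
    -- i ≤ j, so w m ≤ -1, total sum negative, contradiction
    have hwm : w m ≤ -1 := by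
      simp only [hwdef]
      by_cases hmj : m = j
      · rw [if_pos (Or.inr hmj)]
      · rw [if_neg (by push_neg; exact ⟨hm0, hmj⟩)]
        have hnlt : ¬ j < m := by
          intro h
          have h' : (j:ℕ) < (m:ℕ) := h
          rw [hmv] at h'
          omega
        rw [if_neg hnlt]; norm_num
    have hμmpos : 0 < μ m := by rw [hμm]; linarith
    have h1 : w m * μ m ≤ -(1 - ((K:ℝ)-1) * (1/(8*K))) := by
      rw [hμm] at hμmpos ⊢
      nlinarith
    have h2 : ∑ k ∈ Finset.univ.erase m, w k * (1/(8*(K:ℝ)))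
        ≤ ((K:ℝ)-1) * (1/(8*K)) := by
      calc ∑ k ∈ Finset.univ.erase m, w k * (1/(8*(K:ℝ)))
          ≤ ∑ _k ∈ Finset.univ.erase m, (1/(8*(K:ℝ))) := by
            refine Finset.sum_le_sum fun k _ => ?_
            have : w k ≤ 1 := by simp only [hwdef]; split_ifs <;> norm_num
            nlinarith
        _ = ((K:ℝ)-1) * (1/(8*K)) := by
            rw [Finset.sum_const, hcard, nsmul_eq_mul, cast_K_sub_one K hK]
    have hpos : (0:ℝ) < ∑ k, w k * μ k := by rw [← hD]; nlinarith
    rw [hsplit] at hpos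
    linarith
  · intro hlt
    have hjm : j < m := by
      show (j:ℕ) < (m:ℕ)
      rw [hmv]; omega
    have hmj : m ≠ j := ne_of_gt hjm
    have hwm : w m = 1 := by
      simp only [hwdef]
      rw [if_neg (by push_neg; exact ⟨hm0, hmj⟩), if_pos hjm]
    have h2 : -(((K:ℝ)-1) * (3*(1/(8*K)))) ≤ ∑ k ∈ Finset.univ.erase m, w k * (1/(8*(K:ℝ))) := by
      calc -(((K:ℝ)-1) * (3*(1/(8*K))))
          = ∑ _k ∈ Finset.univ.erase m, (-3 * (1/(8*(K:ℝ)))) := by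
            rw [Finset.sum_const, hcard, nsmul_eq_mul, cast_K_sub_one K hK]; ring
        _ ≤ ∑ k ∈ Finset.univ.erase m, w k * (1/(8*(K:ℝ))) := by
            refine Finset.sum_le_sum fun k _ => ?_
            have : -3 ≤ w k := by simp only [hwdef]; split_ifs <;> norm_num
            nlinarith
    have hpos : (0:ℝ) < ∑ k, w k * μ k := by
      rw [hsplit, hwm, hμm]
      nlinarith
    rw [← hD] at hpos
    linarith


lemma softmax_lt_iff {K : ℕ} (z : Fin K → ℝ) (a b : Fin K) :
    softmax z a < softmax z b ↔ z a < z b := by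
  have hs : 0 < ∑ k, Real.exp (z k) :=
    Finset.sum_pos (fun k _ => Real.exp_pos _) ⟨a, Finset.mem_univ a⟩
  unfold softmax
  rw [div_lt_div_iff_of_pos_right hs, Real.exp_lt_exp]

lemma card_lemma (K i : ℕ) (hi1 : 1 ≤ i) (hiK : i < K) :
    (Finset.univ.filter (fun j : Fin K => (j:ℕ) ≠ 0 ∧ (j:ℕ) < i)).card = i - 1 := by
  have hK0 : 0 < K := by omega
  rw [show i - 1 = (Finset.Ico 1 i).card by rw [Nat.card_Ico]]
  apply Finset.card_nbij' (fun j : Fin K => (j : ℕ)) (fun n => ⟨n % K, Nat.mod_lt _ hK0⟩)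
  · intro a ha
    simp only [Finset.mem_coe, Finset.mem_filter, Finset.mem_univ, true_and] at ha
    simp only [Finset.mem_coe, Finset.mem_Ico]; omega
  · intro n hn
    simp only [Finset.mem_coe, Finset.mem_Ico] at hn
    simp only [Finset.mem_coe, Finset.mem_filter, Finset.mem_univ, true_and]
    constructor <;> [skip; skip] <;>
      · have : n % K = n := Nat.mod_eq_of_lt (by omega)
        simp [this]; omega
  · intro a ha
    exact Fin.ext (Nat.mod_eq_of_lt a.isLt)
  · intro n hn
    simp only [Finset.mem_coe, Finset.mem_Ico] at hn
    exact Nat.mod_eq_of_lt (by omega)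


/-- For every K > 2 and β > 0 there is a transitive preference matrix `P`
(with order 1 ≻ 2 ≻ ⋯ ≻ K) such that, for every position i ∈ {1,…,K−1}, some full-support
sampling distribution makes the IPO solution rank the best response (index 0) in the i-th
position, i.e. exactly i−1 other responses get strictly larger probability. -/
theorem best_response_can_take_any_head_rank
    (K : ℕ) (hK : 2 < K) (β : ℝ) (hβ : 0 < β) :
    ∃ P : Matrix (Fin K) (Fin K) ℝ, IsPrefMatrix P ∧
      (∀ i j : Fin K, i < j → (1:ℝ)/2 ≤ P i j) ∧
      ∀ i : ℕ, 1 ≤ i → i ≤ K - 1 →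
        ∃ μ : Fin K → ℝ, InSimplexInterior μ ∧
          (Finset.univ.filter (fun j : Fin K => j ≠ ⟨0, by omega⟩ ∧
            softmax (fun l => β * ∑ k, P l k * μ k) ⟨0, by omega⟩
              < softmax (fun l => β * ∑ k, P l k * μ k) j)).card = i - 1 := by
  refine ⟨Pdm K, Pdm_pref K, Pdm_trans K, ?_⟩
  intro i hi1 hi2
  have hiK : i < K := by omega
  refine ⟨μdm K i hiK, μdm_simplex K i hK hiK, ?_⟩
  have heq : (Finset.univ.filter (fun j : Fin K => j ≠ ⟨0, by omega⟩ ∧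
      softmax (fun l => β * ∑ k, Pdm K l k * μdm K i hiK k) ⟨0, by omega⟩
        < softmax (fun l => β * ∑ k, Pdm K l k * μdm K i hiK k) j))
      = Finset.univ.filter (fun j : Fin K => (j:ℕ) ≠ 0 ∧ (j:ℕ) < i) := by
    refine Finset.filter_congr fun j _ => ?_
    rw [softmax_lt_iff]
    constructor
    · rintro ⟨hj0, hlt⟩
      have hj0' : (j:ℕ) ≠ 0 := fun h => hj0 (Fin.ext h)
      refine ⟨hj0', ?_⟩
      rw [← key_iff K i hK hi1 hiK j hj0']
      exact lt_of_mul_lt_mul_left hlt (le_of_lt hβ)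
    · rintro ⟨hj0', hlt⟩
      refine ⟨fun h => hj0' (by rw [h]), ?_⟩
      exact mul_lt_mul_of_pos_left ((key_iff K i hK hi1 hiK j hj0').mpr hlt) hβ
  rw [heq, card_lemma K i hi1 hiK]
end

section
/- Let P be a strongly transitive K×K preference matrix with order 1 ≻ 2 ≻ ⋯ ≻ K and let β > 0. Then for every sampling distribution μ ∈ Δ_K, the IPO solution with uniform reference, π* = softmax(βPμ), is order-preserving: π*_1 ≥ π*_2 ≥ ⋯ ≥ π*_K. Equivalently, (Pμ)_i ≥ (Pμ)_j for all i < j. -/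
open Finset

/-- Strong transitivity with order 1 ≻ 2 ≻ ⋯ ≻ K: transitive, and
`P i k ≥ max (P i j) (P j k)` whenever i < j < k. -/
def IsStronglyTransitive {K : ℕ} (P : Matrix (Fin K) (Fin K) ℝ) : Prop :=
  (∀ i j : Fin K, i < j → (1:ℝ)/2 ≤ P i j) ∧
  ∀ i j k : Fin K, i < j → j < k → max (P i j) (P j k) ≤ P i k

/-- For strongly transitive `P`, the IPO solution with uniform reference is
order-preserving under every sampling distribution; equivalently `(Pμ)_i ≥ (Pμ)_j` for i < j. -/
theorem strongly_transitive_order_preserving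
    (K : ℕ) (P : Matrix (Fin K) (Fin K) ℝ)
    (hP : IsPrefMatrix P) (hST : IsStronglyTransitive P)
    (β : ℝ) (hβ : 0 < β)
    (μ : Fin K → ℝ) (hμ : InSimplex μ) :
    (∀ i j : Fin K, i ≤ j →
      softmax (fun l => β * ∑ k, P l k * μ k) j
        ≤ softmax (fun l => β * ∑ k, P l k * μ k) i) ∧
    (∀ i j : Fin K, i < j → ∑ k, P j k * μ k ≤ ∑ k, P i k * μ k) := by
  have key : ∀ i j : Fin K, i < j → ∀ k, P j k ≤ P i k := by
    intro i j hij k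
    obtain ⟨hrng, hdiag, hskew⟩ := hP
    obtain ⟨htr, hst⟩ := hST
    rcases lt_trichotomy k i with hk | hk | hk
    · -- k < i < j : P k j ≥ P k i, so 1 - P k j ≤ 1 - P k i
      have h1 := hst k i j hk hij
      have h2 : P k i ≤ P k j := le_trans (le_max_left _ _) h1
      have e1 := hskew k j (ne_of_lt (hk.trans hij))
      have e2 := hskew k i (ne_of_lt hk)
      linarith
    · subst hk
      have e := hskew k j (ne_of_lt hij)
      have h := htr k j hij
      rw [hdiag]
      linarith
    · rcases lt_trichotomy k j with hk2 | hk2 | hk2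
      · -- i < k < j
        have h1 := htr i k hk
        have h2 := htr k j hk2
        have e := hskew k j (ne_of_lt hk2)
        linarith
      · subst hk2
        have h := htr i k hij
        rw [hdiag]
        linarith
      · -- i < j < k
        exact le_trans (le_max_right _ _) (hst i j k hij hk2)
  have key2 : ∀ i j : Fin K, i < j → ∑ k, P j k * μ k ≤ ∑ k, P i k * μ k := by
    intro i j hij
    apply Finset.sum_le_sum
    intro k _
    exact mul_le_mul_of_nonneg_right (key i j hij k) (hμ.1 k)
  refine ⟨?_, key2⟩
  intro i j hij
  rcases eq_or_lt_of_le hij with h | h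
  · subst h; exact le_refl _
  · unfold softmax
    have hsum : 0 < ∑ k, Real.exp (β * ∑ m, P k m * μ m) := by
      apply Finset.sum_pos (fun k _ => Real.exp_pos _)
      exact ⟨i, Finset.mem_univ i⟩
    gcongr
    exact mul_le_mul_of_nonneg_left (key2 i j h) hβ.le
end

section
/- Let a = (a_1,…,a_K) ∈ [0,1]^K, let H ∈ {1,…,K−1}, and suppose there exists ε ≥ 0 such that (i) ε ≥ a_{H+1} ≥ a_{H+2} ≥ ⋯ ≥ a_K, and (ii) a_k ≥ (H + (K−H)ε)/K for every k ≤ H. Then a is majorized: (1/m)Σ_{k=1}^m a_k ≥ (1/K)Σ_{k=1}^K a_k for every m ∈ {1,…,K−1}. -/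
open Finset

/-- Sum of the first `m` coordinates of a vector indexed by `Fin K`. -/
noncomputable def prefixSum {K : ℕ} (a : Fin K → ℝ) (m : ℕ) : ℝ :=
  ∑ k ∈ Finset.univ.filter (fun k : Fin K => (k : ℕ) < m), a k

/-- A vector is majorized if every prefix average is at least the global average. -/
def Majorized {K : ℕ} (a : Fin K → ℝ) : Prop :=
  ∀ m : ℕ, 1 ≤ m → m < K → (1 / (K:ℝ)) * ∑ k, a k ≤ (1 / (m:ℝ)) * prefixSum a m

lemma prefixSum_eq_range {K : ℕ} (a : Fin K → ℝ) (m : ℕ) (hm : m ≤ K) :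
    prefixSum a m = ∑ i ∈ Finset.range m,
      (fun n => if h : n < K then a ⟨n, h⟩ else 0) i := by
  set b : ℕ → ℝ := fun n => if h : n < K then a ⟨n, h⟩ else 0 with hb
  have h1 : prefixSum a m = ∑ i : Fin K, (fun n => if n < m then b n else 0) (i : ℕ) := by
    rw [prefixSum, Finset.sum_filter]
    apply Finset.sum_congr rfl
    intro i _
    simp only [hb]
    rw [dif_pos i.isLt]
  rw [h1, Fin.sum_univ_eq_sum_range (fun n => if n < m then b n else 0) K]
  rw [← Finset.sum_filter]
  congr 1
  ext i
  simp only [Finset.mem_filter, Finset.mem_range]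
  omega

set_option maxHeartbeats 1000000 in
/-- A nonnegative sequence in [0,1] whose tail (indices beyond the head `H`) is
nonincreasing and bounded by ε, and whose head is bounded below by `(H + (K−H)ε)/K`, is
majorized. (Indices are 0-based: the head is `{0,…,H−1}` and the tail is `{H,…,K−1}`.) -/
theorem head_tail_implies_majorization
    (K H : ℕ) (hH1 : 1 ≤ H) (hHK : H < K)
    (a : Fin K → ℝ) (ha : ∀ k, 0 ≤ a k ∧ a k ≤ 1)
    (ε : ℝ) (hε : 0 ≤ ε)
    (htail_le : ∀ k : Fin K, H ≤ (k : ℕ) → a k ≤ ε)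
    (htail_mono : ∀ k l : Fin K, H ≤ (k : ℕ) → k ≤ l → a l ≤ a k)
    (hhead : ∀ k : Fin K, (k : ℕ) < H → ((H : ℝ) + ((K : ℝ) - H) * ε) / K ≤ a k) :
    Majorized a := by
  set b : ℕ → ℝ := fun n => if h : n < K then a ⟨n, h⟩ else 0 with hb
  have hKpos : (0:ℝ) < K := by exact_mod_cast (by omega : 0 < K)
  have hHpos : (0:ℝ) < H := by exact_mod_cast (by omega : 0 < H)
  have hHK' : (H:ℝ) < K := by exact_mod_cast hHK
  -- basic facts about b
  have hb_nonneg : ∀ n, 0 ≤ b n := by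
    intro n; simp only [hb]; split
    · exact (ha _).1
    · exact le_refl 0
  have hb_le_one : ∀ n, b n ≤ 1 := by
    intro n; simp only [hb]; split
    · exact (ha _).2
    · norm_num
  have hb_tail : ∀ n, H ≤ n → b n ≤ ε := by
    intro n hn; simp only [hb]; split
    · exact htail_le _ hn
    · exact hε
  have hb_mono : ∀ k l, H ≤ k → k ≤ l → b l ≤ b k := by
    intro k l hk hkl; simp only [hb]
    by_cases hl : l < K
    · rw [dif_pos hl, dif_pos (by omega : k < K)]
      exact htail_mono ⟨k, by omega⟩ ⟨l, hl⟩ hk hkl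
    · rw [dif_neg hl]
      by_cases hk' : k < K
      · rw [dif_pos hk']; exact (ha _).1
      · rw [dif_neg hk']
  set c : ℝ := ((H : ℝ) + ((K : ℝ) - H) * ε) / K with hc
  have hb_head : ∀ n, n < H → c ≤ b n := by
    intro n hn; simp only [hb]
    rw [dif_pos (by omega : n < K)]
    exact hhead _ hn
  have hc_nonneg : 0 ≤ c := by
    apply div_nonneg _ hKpos.le
    have : (0:ℝ) ≤ ((K:ℝ) - H) * ε := mul_nonneg (by linarith) hε
    linarith
  have hcK : c * K = (H : ℝ) + ((K : ℝ) - H) * ε := div_mul_cancel₀ _ hKpos.ne'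
  -- ε ≤ 1
  have hε1 : ε ≤ 1 := by
    have h0 : c ≤ b 0 := hb_head 0 (by omega)
    have h1 : b 0 ≤ 1 := hb_le_one 0
    have hc1 : c ≤ 1 := le_trans h0 h1
    have hcK1 : (H : ℝ) + ((K : ℝ) - H) * ε ≤ K := by
      rw [← hcK]; nlinarith
    have h2 : ((K:ℝ) - H) * ε ≤ ((K:ℝ) - H) * 1 := by linarith
    exact le_of_mul_le_mul_left h2 (sub_pos.mpr hHK')
  -- total sum
  have htot : ∑ k, a k = ∑ i ∈ Finset.range K, b i := by
    rw [← Fin.sum_univ_eq_sum_range b K]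
    apply Finset.sum_congr rfl
    intro i _
    simp only [hb]
    rw [dif_pos i.isLt]
  -- sum bounds
  have hsum_lb : ∀ (s : Finset ℕ) (x : ℝ), (∀ n ∈ s, x ≤ b n) →
      (s.card : ℝ) * x ≤ ∑ n ∈ s, b n := by
    intro s x hx
    have := Finset.card_nsmul_le_sum s b x hx
    simpa [nsmul_eq_mul] using this
  have hsum_ub : ∀ (s : Finset ℕ) (x : ℝ), (∀ n ∈ s, b n ≤ x) →
      ∑ n ∈ s, b n ≤ (s.card : ℝ) * x := by
    intro s x hx
    have := Finset.sum_le_card_nsmul s b x hx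
    simpa [nsmul_eq_mul] using this
  set PH : ℝ := ∑ i ∈ Finset.range H, b i with hPH
  set T : ℝ := ∑ i ∈ Finset.Ico H K, b i with hT
  have hsplitK : PH + T = ∑ i ∈ Finset.range K, b i :=
    Finset.sum_range_add_sum_Ico b hHK.le
  have hPH_lb : (H : ℝ) * c ≤ PH := by
    have := hsum_lb (Finset.range H) c (fun n hn => hb_head n (Finset.mem_range.mp hn))
    simpa using this
  have hT_ub : T ≤ ((K : ℝ) - H) * ε := by
    have := hsum_ub (Finset.Ico H K) ε (fun n hn => hb_tail n (Finset.mem_Ico.mp hn).1)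
    rw [Nat.card_Ico] at this
    have hcast : ((K - H : ℕ) : ℝ) = (K : ℝ) - H := by
      push_cast [Nat.cast_sub hHK.le]; ring
    rwa [hcast] at this
  -- key inequality: (K-H) * PH ≥ H * T
  have hkey : (H : ℝ) * T ≤ ((K : ℝ) - H) * PH := by
    have h1 : ((K : ℝ) - H) * ((H : ℝ) * c) ≤ ((K : ℝ) - H) * PH :=
      mul_le_mul_of_nonneg_left hPH_lb (by linarith)
    have h2 : (H : ℝ) * T ≤ (H : ℝ) * (((K : ℝ) - H) * ε) :=
      mul_le_mul_of_nonneg_left hT_ub hHpos.le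
    -- (K-H)*H*c ≥ H*(K-H)*ε  ⟺  c*K ≥ ε*K using H(1-ε) ≥ 0
    have h3 : (H : ℝ) * (((K : ℝ) - H) * ε) ≤ ((K : ℝ) - H) * ((H : ℝ) * c) := by
      have hεK : ε * K ≤ c * K := by
        rw [hcK]; nlinarith [mul_nonneg hHpos.le (by linarith : (0:ℝ) ≤ 1 - ε)]
      have hεc : ε ≤ c := le_of_mul_le_mul_right (by linarith [hεK]) hKpos
      have := mul_nonneg (mul_nonneg (sub_nonneg.mpr hHK'.le) hHpos.le) (sub_nonneg.mpr hεc)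
      nlinarith [this]
    linarith
  intro m hm1 hmK
  rw [htot, prefixSum_eq_range a m hmK.le, ← hb]
  set P : ℝ := ∑ i ∈ Finset.range m, b i with hP
  have hmpos : (0:ℝ) < m := by exact_mod_cast hm1
  have hmK' : (m:ℝ) < K := by exact_mod_cast hmK
  suffices h : (m:ℝ) * (PH + T) ≤ (K:ℝ) * P by
    rw [← hsplitK]
    have h2 : (PH + T) / K ≤ P / m := by
      rw [div_le_div_iff₀ hKpos hmpos]; linarith
    calc (1/(K:ℝ)) * (PH + T) = (PH + T) / K := by ring
      _ ≤ P / m := h2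
      _ = (1/(m:ℝ)) * P := by ring
  by_cases hmH : m ≤ H
  · -- head case
    have hmH' : (m:ℝ) ≤ H := by exact_mod_cast hmH
    have hP_lb : (m:ℝ) * c ≤ P := by
      have := hsum_lb (Finset.range m) c
        (fun n hn => hb_head n (lt_of_lt_of_le (Finset.mem_range.mp hn) hmH))
      simpa using this
    have hPH_ub : PH ≤ (H:ℝ) * 1 := by
      have := hsum_ub (Finset.range H) 1 (fun n _ => hb_le_one n)
      simpa using this
    have hub : PH + T ≤ c * K := by rw [hcK]; linarith
    have hA2 : (m:ℝ) * (PH + T) ≤ (m:ℝ) * (c * K) :=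
      mul_le_mul_of_nonneg_left hub hmpos.le
    have hB2 : (K:ℝ) * ((m:ℝ) * c) ≤ (K:ℝ) * P :=
      mul_le_mul_of_nonneg_left hP_lb hKpos.le
    linarith [hA2, hB2]
  · -- tail case
    push_neg at hmH
    have hmH' : (H:ℝ) < m := by exact_mod_cast hmH
    set Tm : ℝ := ∑ i ∈ Finset.Ico H m, b i with hTm
    have hsplitm : PH + Tm = P := Finset.sum_range_add_sum_Ico b hmH.le
    have hsplitT : Tm + ∑ i ∈ Finset.Ico m K, b i = T :=
      Finset.sum_Ico_consecutive b hmH.le hmK.le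
    set x : ℝ := b (m - 1) with hx
    have hx_nonneg : 0 ≤ x := hb_nonneg _
    have e1 : ((m:ℝ) - H) * x ≤ Tm := by
      have := hsum_lb (Finset.Ico H m) x (fun n hn => by
        have hn' := Finset.mem_Ico.mp hn
        exact hb_mono n (m - 1) hn'.1 (by omega))
      rw [Nat.card_Ico] at this
      have hcast : ((m - H : ℕ) : ℝ) = (m : ℝ) - H := by
        push_cast [Nat.cast_sub hmH.le]; ring
      rwa [hcast] at this
    have e2 : T - Tm ≤ ((K:ℝ) - m) * x := by
      have := hsum_ub (Finset.Ico m K) x (fun n hn => by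
        have hn' := Finset.mem_Ico.mp hn
        exact hb_mono (m - 1) n (by omega) (by omega))
      rw [Nat.card_Ico] at this
      have hcast : ((K - m : ℕ) : ℝ) = (K : ℝ) - m := by
        push_cast [Nat.cast_sub hmK.le]; ring
      rw [hcast] at this
      linarith
    clear_value b c PH T Tm P x
    have h1 : ((m:ℝ) - H) * T ≤ ((K:ℝ) - H) * Tm := by
      have hA3 := mul_le_mul_of_nonneg_left e1 (by linarith : (0:ℝ) ≤ (K:ℝ) - m)
      have hB3 := mul_le_mul_of_nonneg_left e2 (by linarith : (0:ℝ) ≤ (m:ℝ) - H)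
      linarith [hA3, hB3]
    have hfin : ((K:ℝ) - H) * ((m:ℝ) * (PH + T)) ≤ ((K:ℝ) - H) * ((K:ℝ) * P) := by
      rw [← hsplitm]
      have hA4 := mul_le_mul_of_nonneg_left h1 hKpos.le
      have hB4 := mul_le_mul_of_nonneg_left hkey (by linarith : (0:ℝ) ≤ (K:ℝ) - m)
      linarith [hA4, hB4]
    exact le_of_mul_le_mul_left hfin (by linarith)
end

section
/- Let K = 3, a ∈ (0,1/2), and let P be the rock–paper–scissors preference matrix with rows (1/2, 1/2+a, 1/2−a), (1/2−a, 1/2, 1/2+a), (1/2+a, 1/2−a, 1/2). Let u = (1/3,1/3,1/3), take π_ref = π_0 = u, and for α, λ ∈ [0,1] and β > 0 define the MRS-IPO map T(π) = softmax(α·log π + (1−α)·log u + β·P(λπ + (1−λ)u)) on full-support distributions. Then: (i) T(u) = u, so u is a fixed point; (ii) the derivative DT(u) maps the tangent space V = {v ∈ ℝ³ : v_1+v_2+v_3 = 0} to itself, and for every v ∈ V one has ‖DT(u)v‖₂ = √(α² + a²β²λ²/3)·‖v‖₂. In particular, if α² + a²β²λ²/3 > 1, then DT(u) expands every nonzero tangent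 vector and the fixed point u is linearly unstable. -/
open Finset

noncomputable def prj (i : Fin 3) : (Fin 3 → ℝ) →L[ℝ] ℝ := ContinuousLinearMap.proj i

@[simp] lemma prj_apply (i : Fin 3) (v : Fin 3 → ℝ) : prj i v = v i := rfl

noncomputable def zf (α lam β : ℝ) (P : Matrix (Fin 3) (Fin 3) ℝ) (π : Fin 3 → ℝ)
    (i : Fin 3) : ℝ :=
  α * Real.log (π i) + (1 - α) * Real.log ((1:ℝ)/3)
    + β * ∑ k, P i k * (lam * π k + (1 - lam) * ((1:ℝ)/3))

noncomputable def Lmap (α lam β : ℝ) (P : Matrix (Fin 3) (Fin 3) ℝ) (i : Fin 3) :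
    (Fin 3 → ℝ) →L[ℝ] ℝ :=
  ∑ k, ((if k = i then 3*α else 0) + β * lam * P i k) • prj k

lemma Lmap_apply (α lam β : ℝ) (P : Matrix (Fin 3) (Fin 3) ℝ) (i : Fin 3) (v : Fin 3 → ℝ) :
    Lmap α lam β P i v = ∑ k, ((if k = i then 3*α else 0) + β * lam * P i k) * v k := by
  simp [Lmap]

noncomputable def Pmat (a : ℝ) : Matrix (Fin 3) (Fin 3) ℝ :=
  !![1/2, 1/2 + a, 1/2 - a;
     1/2 - a, 1/2, 1/2 + a;
     1/2 + a, 1/2 - a, 1/2]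

noncomputable def Dmat (a α lam β : ℝ) : Matrix (Fin 3) (Fin 3) ℝ :=
  !![2*α/3, -α/3 + a*β*lam/3, -α/3 - a*β*lam/3;
     -α/3 - a*β*lam/3, 2*α/3, -α/3 + a*β*lam/3;
     -α/3 + a*β*lam/3, -α/3 - a*β*lam/3, 2*α/3]

lemma hasFDerivAt_zf (α lam β : ℝ) (P : Matrix (Fin 3) (Fin 3) ℝ) (i : Fin 3) :
    HasFDerivAt (fun π => zf α lam β P π i) (Lmap α lam β P i) (fun _ => (1:ℝ)/3) := by
  have hbase : ∀ k : Fin 3,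
      HasFDerivAt (fun π : Fin 3 → ℝ => π k) (prj k) (fun _ => (1:ℝ)/3) :=
    fun k => (prj k).hasFDerivAt
  have h1 : HasFDerivAt (fun π : Fin 3 → ℝ => α * Real.log (π i))
      ((3*α) • prj i) (fun _ => (1:ℝ)/3) := by
    have h := ((hbase i).log (by norm_num)).const_mul α
    refine h.congr_fderiv ?_
    ext v; simp; ring
  have hk : ∀ k : Fin 3,
      HasFDerivAt (fun π : Fin 3 → ℝ => P i k * (lam * π k + (1 - lam) * ((1:ℝ)/3)))
        ((P i k * lam) • prj k) (fun _ => (1:ℝ)/3) := by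
    intro k
    have h := (((hbase k).const_mul lam).add_const ((1 - lam) * ((1:ℝ)/3))).const_mul (P i k)
    refine h.congr_fderiv ?_
    ext v; simp; ring
  have hsum := HasFDerivAt.fun_sum (u := Finset.univ) (fun k _ => hk k)
  have h3 := hsum.const_mul β
  have h := (h1.add (hasFDerivAt_const ((1 - α) * Real.log ((1:ℝ)/3)) _)).add h3
  refine h.congr_fderiv ?_
  ext v
  fin_cases i <;> simp [Lmap, Fin.sum_univ_three] <;> ring

lemma zf_u (a α lam β : ℝ) (i : Fin 3) :
    zf α lam β (Pmat a) (fun _ => (1:ℝ)/3) i = Real.log ((1:ℝ)/3) + β/2 := by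
  fin_cases i <;>
    simp [zf, Pmat, Fin.sum_univ_three] <;> ring

set_option maxHeartbeats 1000000 in
lemma coord (a α lam β : ℝ) (i : Fin 3) :
    HasFDerivAt (fun π => softmax (zf α lam β (Pmat a) π) i)
      (∑ k, (Dmat a α lam β i k) • prj k) (fun _ => (1:ℝ)/3) := by
  set E : ℝ := Real.exp (Real.log ((1:ℝ)/3) + β/2) with hE
  have hEpos : 0 < E := Real.exp_pos _
  clear_value E
  have hnum : ∀ j : Fin 3,
      HasFDerivAt (fun π => Real.exp (zf α lam β (Pmat a) π j))
        (E • Lmap α lam β (Pmat a) j) (fun _ => (1:ℝ)/3) := by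
    intro j
    have h := (hasFDerivAt_zf α lam β (Pmat a) j).exp
    simp only [zf_u, ← hE] at h
    exact h
  have hsum : HasFDerivAt (fun π => ∑ k, Real.exp (zf α lam β (Pmat a) π k))
      (∑ k, E • Lmap α lam β (Pmat a) k) (fun _ => (1:ℝ)/3) :=
    HasFDerivAt.fun_sum (fun k _ => hnum k)
  have hSval : (∑ k, Real.exp (zf α lam β (Pmat a) (fun _ => (1:ℝ)/3) k)) = 3 * E := by
    simp only [Fin.sum_univ_three, zf_u, ← hE]; ring
  have hSne : (∑ k, Real.exp (zf α lam β (Pmat a) (fun _ => (1:ℝ)/3) k)) ≠ 0 := by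
    rw [hSval]; positivity
  have hinv : HasFDerivAt (fun π => (∑ k, Real.exp (zf α lam β (Pmat a) π k))⁻¹)
      ((-((3*E) ^ 2)⁻¹) • (∑ k, E • Lmap α lam β (Pmat a) k)) (fun _ => (1:ℝ)/3) := by
    have h := (hasDerivAt_inv hSne).comp_hasFDerivAt (fun _ => (1:ℝ)/3) hsum
    rw [hSval] at h
    exact h
  have hprod := (hnum i).mul hinv
  have hfun : (fun π => softmax (zf α lam β (Pmat a) π) i)
      = fun π => Real.exp (zf α lam β (Pmat a) π i)
          * (∑ k, Real.exp (zf α lam β (Pmat a) π k))⁻¹ := by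
    funext π; simp [softmax, div_eq_mul_inv]
  rw [hfun]
  refine hprod.congr_fderiv ?_
  ext v
  simp only [ContinuousLinearMap.add_apply, ContinuousLinearMap.smul_apply,
    ContinuousLinearMap.sum_apply, smul_eq_mul, Lmap_apply, prj_apply, zf_u, ← hE, hSval]
  have hE0 : E ≠ 0 := ne_of_gt hEpos
  simp only [Fin.sum_univ_three]
  fin_cases i
  · simp only [Dmat, Pmat, Matrix.cons_val_zero, Matrix.cons_val_one, Matrix.head_cons,
      Matrix.cons_val_two, Matrix.tail_cons, Matrix.head_fin_const]
    norm_num [Fin.ext_iff]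
    field_simp
    simp [Matrix.vecHead, Matrix.vecTail]
    ring
  · simp only [Fin.mk_one, Dmat, Pmat, Matrix.cons_val_zero, Matrix.cons_val_one, Matrix.head_cons,
      Matrix.cons_val_two, Matrix.tail_cons, Matrix.head_fin_const]
    norm_num [Fin.ext_iff]
    field_simp
    simp [Matrix.vecHead, Matrix.vecTail]
    ring
  · simp only [Dmat, Pmat, Matrix.cons_val_zero, Matrix.cons_val_one, Matrix.head_cons,
      Matrix.cons_val_two, Matrix.tail_cons, Matrix.head_fin_const]
    norm_num [Fin.ext_iff]
    field_simp
    simp [Matrix.vecHead, Matrix.vecTail]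
    ring


/-- For the rock–paper–scissors preference matrix, the uniform distribution is a
fixed point of the MRS-IPO map; its derivative there preserves the tangent space
`{v : v₁+v₂+v₃ = 0}` and scales the Euclidean norm of every tangent vector by exactly
`√(α² + a²β²λ²/3)`. In particular, if `α² + a²β²λ²/3 > 1`, every nonzero tangent vector is
expanded, so the fixed point is linearly unstable. -/
theorem rps_mrs_ipo_instability
    (a α lam β : ℝ) (ha : 0 < a) (ha' : a < 1/2)
    (hα : 0 ≤ α) (hα' : α ≤ 1) (hlam : 0 ≤ lam) (hlam' : lam ≤ 1) (hβ : 0 < β)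
    (P : Matrix (Fin 3) (Fin 3) ℝ)
    (hPdef : P = !![1/2, 1/2 + a, 1/2 - a;
                    1/2 - a, 1/2, 1/2 + a;
                    1/2 + a, 1/2 - a, 1/2])
    (u : Fin 3 → ℝ) (hu : u = fun _ => (1:ℝ)/3)
    (T : (Fin 3 → ℝ) → Fin 3 → ℝ)
    (hT : ∀ π, T π = softmax (fun i =>
      α * Real.log (π i) + (1 - α) * Real.log ((1:ℝ)/3)
        + β * ∑ k, P i k * (lam * π k + (1 - lam) * ((1:ℝ)/3)))) :
    T u = u ∧
    ∃ D : (Fin 3 → ℝ) →L[ℝ] (Fin 3 → ℝ),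
      HasFDerivAt T D u ∧
      (∀ v : Fin 3 → ℝ, (∑ i, v i) = 0 → (∑ i, D v i) = 0) ∧
      (∀ v : Fin 3 → ℝ, (∑ i, v i) = 0 →
        Real.sqrt (∑ i, (D v i) ^ 2)
          = Real.sqrt (α ^ 2 + a ^ 2 * β ^ 2 * lam ^ 2 / 3) * Real.sqrt (∑ i, (v i) ^ 2)) ∧
      (α ^ 2 + a ^ 2 * β ^ 2 * lam ^ 2 / 3 > 1 →
        ∀ v : Fin 3 → ℝ, (∑ i, v i) = 0 → v ≠ 0 →
          Real.sqrt (∑ i, (v i) ^ 2) < Real.sqrt (∑ i, (D v i) ^ 2)) := by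
  have hP : P = Pmat a := hPdef
  subst hP
  subst hu
  have hT' : ∀ π, T π = softmax (zf α lam β (Pmat a) π) := hT
  have hTeq : T = fun π => softmax (zf α lam β (Pmat a) π) := funext hT'
  set D : (Fin 3 → ℝ) →L[ℝ] (Fin 3 → ℝ) :=
    ContinuousLinearMap.pi (fun i => ∑ k, Dmat a α lam β i k • prj k) with hDdef
  have hDapp : ∀ (v : Fin 3 → ℝ) (i : Fin 3),
      D v i = ∑ k, Dmat a α lam β i k * v k := by
    intro v i
    simp [hDdef]
  have hD : HasFDerivAt T D (fun _ => (1:ℝ)/3) := by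
    rw [hTeq]
    exact hasFDerivAt_pi.mpr (fun i => coord a α lam β i)
  have hsum0 : ∀ v : Fin 3 → ℝ, (∑ i, v i) = 0 → (∑ i, D v i) = 0 := by
    intro v _
    simp only [hDapp, Fin.sum_univ_three]
    norm_num [Dmat, Matrix.cons_val_zero, Matrix.cons_val_one,
      Matrix.head_cons, Matrix.cons_val_two, Matrix.tail_cons, Matrix.head_fin_const]
    ring
  have hkey : ∀ v : Fin 3 → ℝ, (∑ i, v i) = 0 →
      (∑ i, (D v i) ^ 2) = (α ^ 2 + a ^ 2 * β ^ 2 * lam ^ 2 / 3) * ∑ i, (v i) ^ 2 := by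
    intro v hv
    rw [Fin.sum_univ_three] at hv
    have h2 : v 2 = -v 0 - v 1 := by linarith
    simp only [hDapp, Fin.sum_univ_three]
    norm_num [Dmat, Matrix.cons_val_zero, Matrix.cons_val_one,
      Matrix.head_cons, Matrix.cons_val_two, Matrix.tail_cons, Matrix.head_fin_const]
    rw [h2]
    ring
  have hnorm : ∀ v : Fin 3 → ℝ, (∑ i, v i) = 0 →
      Real.sqrt (∑ i, (D v i) ^ 2)
        = Real.sqrt (α ^ 2 + a ^ 2 * β ^ 2 * lam ^ 2 / 3) * Real.sqrt (∑ i, (v i) ^ 2) := by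
    intro v hv
    rw [hkey v hv, Real.sqrt_mul (by positivity)]
  refine ⟨?_, D, hD, hsum0, hnorm, ?_⟩
  · funext i
    rw [hT']
    simp only [softmax, Fin.sum_univ_three, zf_u]
    have hEpos := Real.exp_pos (Real.log ((1:ℝ)/3) + β/2)
    rw [div_eq_iff (by positivity)]
    ring
  · intro hK v hv hv0
    have hpos : 0 < ∑ i, (v i) ^ 2 := by
      obtain ⟨i, hi⟩ : ∃ i, v i ≠ 0 := by
        by_contra h
        push_neg at h
        exact hv0 (funext h)
      exact Finset.sum_pos' (fun j _ => sq_nonneg _) ⟨i, Finset.mem_univ i, by positivity⟩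
    have h1 : 1 < Real.sqrt (α ^ 2 + a ^ 2 * β ^ 2 * lam ^ 2 / 3) := by
      rw [show (1:ℝ) = Real.sqrt 1 from Real.sqrt_one.symm]
      exact Real.sqrt_lt_sqrt zero_le_one hK
    have h2 : 0 < Real.sqrt (∑ i, (v i) ^ 2) := Real.sqrt_pos.mpr hpos
    rw [hnorm v hv]
    nlinarith
end

section
/- Let P be any K×K preference matrix, let π_ref, π_0 ∈ Δ_K° be full-support, let α, λ ∈ [0,1] and β > 0, and let à = P − (1/2)·11ᵀ where 1 is the all-ones vector. Consider the MRS-IPO dynamics π_{t+1} = softmax(α·log π_t + (1−α)·log π_ref + β·P(λπ_t + (1−λ)π_0)). If α + (βλ/2)·‖Ã‖₂ < 1, where ‖·‖₂ is the spectral norm, then there exists a unique fixed point π* ∈ Δ_K° of this map, and for every initialization π_1 ∈ Δ_K° the iterates π_t converge to π*. Moreover, if each row of à has at most d nonzero entries, the same conclusion holds under the condition α + βλd/4 < 1. -/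
open scoped Classical
open Finset

/-- The spectral norm (largest singular value) of a real square matrix, as the operator norm of
the induced map on Euclidean space. -/
noncomputable def specNorm {K : ℕ} (A : Matrix (Fin K) (Fin K) ℝ) : ℝ :=
  ‖Matrix.toEuclideanCLM (𝕜 := ℝ) A‖

variable {K : ℕ}

lemma sumexp_pos (hK : 0 < K) (z : Fin K → ℝ) : 0 < ∑ k, Real.exp (z k) := by
  haveI : Nonempty (Fin K) := Fin.pos_iff_nonempty.mp hK
  exact Finset.sum_pos (fun k _ => Real.exp_pos _) Finset.univ_nonempty

lemma softmax_pos (hK : 0 < K) (z : Fin K → ℝ) (i : Fin K) : 0 < softmax z i :=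
  div_pos (Real.exp_pos _) (sumexp_pos hK z)

lemma softmax_sum (hK : 0 < K) (z : Fin K → ℝ) : ∑ i, softmax z i = 1 := by
  simp only [softmax]; rw [← Finset.sum_div]
  exact div_self (ne_of_gt (sumexp_pos hK z))

lemma softmax_add_const (z : Fin K → ℝ) (c : ℝ) :
    softmax (fun i => z i + c) = softmax z := by
  funext i
  simp only [softmax, Real.exp_add, ← Finset.sum_mul]
  rw [mul_div_mul_right _ _ (Real.exp_ne_zero c)]

lemma softmax_log (hK : 0 < K) {π : Fin K → ℝ} (h1 : ∀ i, 0 < π i) (h2 : ∑ i, π i = 1) :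
    softmax (fun i => Real.log (π i)) = π := by
  funext i
  simp only [softmax, Real.exp_log (h1 _)]
  rw [show ∑ k, π k = 1 from h2, div_one]

lemma log_softmax (z : Fin K → ℝ) (i : Fin K) :
    Real.log (softmax z i) = z i - Real.log (∑ k, Real.exp (z k)) := by
  rw [softmax, Real.log_div (Real.exp_ne_zero _), Real.log_exp]
  intro h
  have := Real.exp_pos (z i)
  have : (0:ℝ) < ∑ k, Real.exp (z k) :=
    Finset.sum_pos' (fun k _ => (Real.exp_pos _).le) ⟨i, Finset.mem_univ i, Real.exp_pos _⟩
  rw [h] at this; exact lt_irrefl 0 this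

lemma var_le_half (hK : 0 < K) (p g : Fin K → ℝ) (hp : ∀ i, 0 ≤ p i)
    (hs : ∑ i, p i = 1) :
    ∑ i, p i * g i ^ 2 - (∑ i, p i * g i) ^ 2 ≤ (1/2) * ∑ i, g i ^ 2 := by
  haveI : Nonempty (Fin K) := Fin.pos_iff_nonempty.mp hK
  obtain ⟨i₀, -, hmax⟩ := Finset.exists_max_image Finset.univ g Finset.univ_nonempty
  obtain ⟨j₀, -, hmin⟩ := Finset.exists_min_image Finset.univ g Finset.univ_nonempty
  set M := g i₀ with hM
  set m := g j₀ with hm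
  set c : ℝ := (M + m) / 2 with hc
  have expand : ∑ i, p i * (g i - c) ^ 2
      = (∑ i, p i * g i ^ 2) - 2 * c * (∑ i, p i * g i) + c ^ 2 * (∑ i, p i) := by
    rw [show (fun i => p i * (g i - c) ^ 2)
        = fun i => p i * g i ^ 2 - 2 * c * (p i * g i) + c ^ 2 * p i from
      funext fun i => by ring]
    rw [Finset.sum_add_distrib, Finset.sum_sub_distrib, ← Finset.mul_sum, ← Finset.mul_sum]
  have step1 : ∑ i, p i * g i ^ 2 - (∑ i, p i * g i) ^ 2 ≤ ∑ i, p i * (g i - c) ^ 2 := by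
    rw [expand, hs]
    nlinarith [sq_nonneg ((∑ i, p i * g i) - c)]
  have step2 : ∑ i, p i * (g i - c) ^ 2 ≤ ((M - m)/2) ^ 2 := by
    calc ∑ i, p i * (g i - c) ^ 2 ≤ ∑ i, p i * ((M - m)/2) ^ 2 := by
          apply Finset.sum_le_sum
          intro i _
          apply mul_le_mul_of_nonneg_left _ (hp i)
          have h1 : g i ≤ M := hmax i (Finset.mem_univ i)
          have h2 : m ≤ g i := hmin i (Finset.mem_univ i)
          have : -((M - m)/2) ≤ g i - c := by rw [hc]; linarith
          have : g i - c ≤ (M - m)/2 := by rw [hc]; linarith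
          nlinarith
      _ = ((M - m)/2) ^ 2 := by rw [← Finset.sum_mul, hs, one_mul]
  have step3 : ((M - m)/2) ^ 2 ≤ (1/2) * ∑ i, g i ^ 2 := by
    rcases eq_or_ne i₀ j₀ with h | h
    · have : M = m := by rw [hM, hm, h]
      rw [this]
      simp only [sub_self]
      have : (0:ℝ) ≤ ∑ i, g i ^ 2 := Finset.sum_nonneg fun i _ => sq_nonneg _
      nlinarith
    · have hsub : ({i₀, j₀} : Finset (Fin K)) ⊆ Finset.univ := Finset.subset_univ _
      have hpair : ∑ i ∈ ({i₀, j₀} : Finset (Fin K)), g i ^ 2 = M ^ 2 + m ^ 2 := by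
        rw [Finset.sum_pair h]
      have : M ^ 2 + m ^ 2 ≤ ∑ i, g i ^ 2 := by
        rw [← hpair]
        exact Finset.sum_le_sum_of_subset_of_nonneg hsub fun i _ _ => sq_nonneg _
      nlinarith [sq_nonneg (M + m)]
  linarith

lemma cov_le (hK : 0 < K) (p g h : Fin K → ℝ) (hp : ∀ i, 0 ≤ p i)
    (hs : ∑ i, p i = 1) :
    |∑ i, p i * g i * h i - (∑ i, p i * g i) * (∑ i, p i * h i)| ≤
      (1/2) * Real.sqrt (∑ i, g i ^ 2) * Real.sqrt (∑ i, h i ^ 2) := by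
  set mg := ∑ i, p i * g i with hmg
  set mh := ∑ i, p i * h i with hmh
  set a : Fin K → ℝ := fun i => Real.sqrt (p i) * (g i - mg) with ha
  set b : Fin K → ℝ := fun i => Real.sqrt (p i) * (h i - mh) with hb
  have hab : ∀ i, a i * b i = p i * g i * h i - mg * (p i * h i) - mh * (p i * g i)
      + mg * mh * p i := by
    intro i
    have hpp : Real.sqrt (p i) * Real.sqrt (p i) = p i := Real.mul_self_sqrt (hp i)
    calc a i * b i = (Real.sqrt (p i) * Real.sqrt (p i)) * ((g i - mg) * (h i - mh)) := by
          rw [ha, hb]; ring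
      _ = _ := by rw [hpp]; ring
  have hsum : ∑ i, a i * b i
      = (∑ i, p i * g i * h i) - mg * mh := by
    rw [show (fun i => a i * b i) = fun i => p i * g i * h i - mg * (p i * h i)
        - mh * (p i * g i) + mg * mh * p i from funext hab]
    rw [Finset.sum_add_distrib, Finset.sum_sub_distrib, Finset.sum_sub_distrib,
      ← Finset.mul_sum, ← Finset.mul_sum, ← Finset.mul_sum, ← hmg, ← hmh, hs]
    ring
  have haa : ∑ i, a i ^ 2 = (∑ i, p i * g i ^ 2) - mg ^ 2 := by
    have expand : ∀ i, a i ^ 2 = p i * g i ^ 2 - 2 * mg * (p i * g i) + mg ^ 2 * p i := by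
      intro i
      have hpp : Real.sqrt (p i) * Real.sqrt (p i) = p i := Real.mul_self_sqrt (hp i)
      calc a i ^ 2 = (Real.sqrt (p i) * Real.sqrt (p i)) * (g i - mg) ^ 2 := by rw [ha]; ring
        _ = _ := by rw [hpp]; ring
    rw [show (fun i => a i ^ 2) = fun i => p i * g i ^ 2 - 2 * mg * (p i * g i)
        + mg ^ 2 * p i from funext expand]
    rw [Finset.sum_add_distrib, Finset.sum_sub_distrib, ← Finset.mul_sum, ← Finset.mul_sum,
      ← hmg, hs]
    ring
  have hbb : ∑ i, b i ^ 2 = (∑ i, p i * h i ^ 2) - mh ^ 2 := by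
    have expand : ∀ i, b i ^ 2 = p i * h i ^ 2 - 2 * mh * (p i * h i) + mh ^ 2 * p i := by
      intro i
      have hpp : Real.sqrt (p i) * Real.sqrt (p i) = p i := Real.mul_self_sqrt (hp i)
      calc b i ^ 2 = (Real.sqrt (p i) * Real.sqrt (p i)) * (h i - mh) ^ 2 := by rw [hb]; ring
        _ = _ := by rw [hpp]; ring
    rw [show (fun i => b i ^ 2) = fun i => p i * h i ^ 2 - 2 * mh * (p i * h i)
        + mh ^ 2 * p i from funext expand]
    rw [Finset.sum_add_distrib, Finset.sum_sub_distrib, ← Finset.mul_sum, ← Finset.mul_sum,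
      ← hmh, hs]
    ring
  have hcs : (∑ i, a i * b i) ^ 2 ≤ (∑ i, a i ^ 2) * ∑ i, b i ^ 2 :=
    Finset.sum_mul_sq_le_sq_mul_sq Finset.univ a b
  have hva : ∑ i, a i ^ 2 ≤ (1/2) * ∑ i, g i ^ 2 := by
    rw [haa]; exact var_le_half hK p g hp hs
  have hvb : ∑ i, b i ^ 2 ≤ (1/2) * ∑ i, h i ^ 2 := by
    rw [hbb]; exact var_le_half hK p h hp hs
  have hG : (0:ℝ) ≤ ∑ i, g i ^ 2 := Finset.sum_nonneg fun i _ => sq_nonneg _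
  have hH : (0:ℝ) ≤ ∑ i, h i ^ 2 := Finset.sum_nonneg fun i _ => sq_nonneg _
  have hann : (0:ℝ) ≤ ∑ i, a i ^ 2 := Finset.sum_nonneg fun i _ => sq_nonneg _
  have hbnn : (0:ℝ) ≤ ∑ i, b i ^ 2 := Finset.sum_nonneg fun i _ => sq_nonneg _
  have hsq : ((∑ i, p i * g i * h i) - mg * mh) ^ 2
      ≤ ((1/2) * Real.sqrt (∑ i, g i ^ 2) * Real.sqrt (∑ i, h i ^ 2)) ^ 2 := by
    rw [← hsum]
    calc (∑ i, a i * b i) ^ 2 ≤ (∑ i, a i ^ 2) * ∑ i, b i ^ 2 := hcs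
      _ ≤ ((1/2) * ∑ i, g i ^ 2) * ((1/2) * ∑ i, h i ^ 2) := by
          apply mul_le_mul hva hvb hbnn
          linarith
      _ = _ := by
          rw [mul_pow, mul_pow, Real.sq_sqrt hG, Real.sq_sqrt hH]
          ring
  have hx : (0:ℝ) ≤ (1/2) * Real.sqrt (∑ i, g i ^ 2) * Real.sqrt (∑ i, h i ^ 2) := by
    positivity
  nlinarith [abs_nonneg ((∑ i, p i * g i * h i) - mg * mh),
    sq_abs ((∑ i, p i * g i * h i) - mg * mh)]

lemma softmax_lipschitz (hK : 0 < K) (u v : Fin K → ℝ) :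
    Real.sqrt (∑ i, (softmax u i - softmax v i) ^ 2) ≤
      (1/2) * Real.sqrt (∑ i, (u i - v i) ^ 2) := by
  haveI : Nonempty (Fin K) := Fin.pos_iff_nonempty.mp hK
  set g : Fin K → ℝ := fun i => softmax u i - softmax v i with hg
  set δ : Fin K → ℝ := fun i => u i - v i with hδ
  set z : ℝ → Fin K → ℝ := fun s k => v k + s * δ k with hz
  set N : ℝ → ℝ := fun s => ∑ i, g i * Real.exp (z s i) with hN
  set D : ℝ → ℝ := fun s => ∑ k, Real.exp (z s k) with hD
  have hDpos : ∀ s, 0 < D s := fun s => sumexp_pos hK (z s)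
  set φ : ℝ → ℝ := fun s => N s / D s with hφ
  -- derivatives
  have hNd : ∀ s, HasDerivAt N (∑ i, g i * (Real.exp (z s i) * δ i)) s := by
    intro s
    apply HasDerivAt.fun_sum
    intro i _
    have h1 : HasDerivAt (fun s : ℝ => v i + s * δ i) (δ i) s := by
      simpa using (hasDerivAt_mul_const (δ i)).const_add (v i)
    exact (h1.exp).const_mul (g i)
  have hDd : ∀ s, HasDerivAt D (∑ k, Real.exp (z s k) * δ k) s := by
    intro s
    apply HasDerivAt.fun_sum
    intro k _
    have h1 : HasDerivAt (fun s : ℝ => v k + s * δ k) (δ k) s := by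
      simpa using (hasDerivAt_mul_const (δ k)).const_add (v k)
    exact h1.exp
  have hφd : ∀ s, HasDerivAt φ
      (((∑ i, g i * (Real.exp (z s i) * δ i)) * D s
        - N s * (∑ k, Real.exp (z s k) * δ k)) / (D s) ^ 2) s := by
    intro s
    exact (hNd s).div (hDd s) (ne_of_gt (hDpos s))
  -- MVT
  obtain ⟨c, -, hceq⟩ := exists_hasDerivAt_eq_slope φ _ (by norm_num : (0:ℝ) < 1)
    (fun x _ => (hφd x).continuousAt.continuousWithinAt) (fun x _ => hφd x)
  -- endpoints
  have hz1 : z 1 = u := by funext k; simp [hz, hδ]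
  have hz0 : z 0 = v := by funext k; simp [hz]
  have hφs : ∀ s, φ s = ∑ i, g i * softmax (z s) i := by
    intro s
    simp only [hφ, hN, softmax]
    rw [Finset.sum_div]
    apply Finset.sum_congr rfl
    intro i _
    rw [mul_div_assoc]
  have hslope : (φ 1 - φ 0) / (1 - 0) = ∑ i, g i ^ 2 := by
    rw [show (1:ℝ) - 0 = 1 by norm_num, div_one]
    rw [hφs 1, hφs 0, hz1, hz0]
    rw [← Finset.sum_sub_distrib]
    apply Finset.sum_congr rfl
    intro i _
    rw [hg]; ring
  -- express derivative as covariance and bound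
  set p : Fin K → ℝ := fun i => Real.exp (z c i) / D c with hp
  have hpnn : ∀ i, 0 ≤ p i := fun i => le_of_lt (div_pos (Real.exp_pos _) (hDpos c))
  have hps : ∑ i, p i = 1 := by
    rw [hp, ← Finset.sum_div]
    exact div_self (ne_of_gt (hDpos c))
  have hder_eq : ((∑ i, g i * (Real.exp (z c i) * δ i)) * D c
        - N c * (∑ k, Real.exp (z c k) * δ k)) / (D c) ^ 2
      = (∑ i, p i * g i * δ i) - (∑ i, p i * g i) * (∑ i, p i * δ i) := by
    have e1 : ∑ i, p i * g i * δ i = (∑ i, g i * (Real.exp (z c i) * δ i)) / D c := by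
      rw [Finset.sum_div]
      exact Finset.sum_congr rfl fun i _ => by rw [hp]; ring
    have e2 : ∑ i, p i * g i = N c / D c := by
      rw [hN, Finset.sum_div]
      exact Finset.sum_congr rfl fun i _ => by rw [hp]; ring
    have e3 : ∑ i, p i * δ i = (∑ k, Real.exp (z c k) * δ k) / D c := by
      rw [Finset.sum_div]
      exact Finset.sum_congr rfl fun i _ => by rw [hp]; ring
    rw [e1, e2, e3]
    field_simp
  have hbound : |(∑ i, p i * g i * δ i) - (∑ i, p i * g i) * (∑ i, p i * δ i)|
      ≤ (1/2) * Real.sqrt (∑ i, g i ^ 2) * Real.sqrt (∑ i, δ i ^ 2) :=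
    cov_le hK p g δ hpnn hps
  have hkey : ∑ i, g i ^ 2 ≤ (1/2) * Real.sqrt (∑ i, g i ^ 2) * Real.sqrt (∑ i, δ i ^ 2) := by
    have h1 : (∑ i, p i * g i * δ i) - (∑ i, p i * g i) * (∑ i, p i * δ i)
        = ∑ i, g i ^ 2 := by rw [← hder_eq, hceq, hslope]
    calc ∑ i, g i ^ 2 = _ := h1.symm
      _ ≤ _ := le_trans (le_abs_self _) hbound
  set X := Real.sqrt (∑ i, g i ^ 2) with hX
  have hXnn : 0 ≤ X := Real.sqrt_nonneg _
  have hYnn : 0 ≤ Real.sqrt (∑ i, δ i ^ 2) := Real.sqrt_nonneg _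
  have hX2 : X ^ 2 = ∑ i, g i ^ 2 :=
    Real.sq_sqrt (Finset.sum_nonneg fun i _ => sq_nonneg _)
  have : X ^ 2 ≤ (1/2) * X * Real.sqrt (∑ i, δ i ^ 2) := by rw [hX2]; exact hkey
  rcases eq_or_lt_of_le hXnn with h0 | h0
  · rw [← h0]; positivity
  · nlinarith

lemma euclid_norm_eq (x : Fin K → ℝ) :
    ‖(WithLp.equiv 2 (Fin K → ℝ)).symm x‖ = Real.sqrt (∑ i, x i ^ 2) := by
  rw [EuclideanSpace.norm_eq]
  congr 1
  apply Finset.sum_congr rfl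
  intro i _
  rw [show ((WithLp.equiv 2 (Fin K → ℝ)).symm x).ofLp i = x i from rfl, Real.norm_eq_abs, sq_abs]

lemma clm_apply_eq (A : Matrix (Fin K) (Fin K) ℝ) (x : Fin K → ℝ) :
    (Matrix.toEuclideanCLM (𝕜 := ℝ) A) ((WithLp.equiv 2 (Fin K → ℝ)).symm x)
      = (WithLp.equiv 2 (Fin K → ℝ)).symm (A.mulVec x) := by
  exact Matrix.toEuclideanCLM_toLp A x

lemma mulVec_sqrt_le (A : Matrix (Fin K) (Fin K) ℝ) (x : Fin K → ℝ) :
    Real.sqrt (∑ i, (A.mulVec x i) ^ 2) ≤ specNorm A * Real.sqrt (∑ i, x i ^ 2) := by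
  rw [← euclid_norm_eq, ← euclid_norm_eq, ← clm_apply_eq]
  exact ContinuousLinearMap.le_opNorm _ _

lemma specNorm_le_of_sqrt_bound (A : Matrix (Fin K) (Fin K) ℝ) (C : ℝ) (hC : 0 ≤ C)
    (h : ∀ x : Fin K → ℝ,
      Real.sqrt (∑ i, (A.mulVec x i) ^ 2) ≤ C * Real.sqrt (∑ i, x i ^ 2)) :
    specNorm A ≤ C := by
  apply ContinuousLinearMap.opNorm_le_bound _ hC
  intro y
  have hy : y = (WithLp.equiv 2 (Fin K → ℝ)).symm ((WithLp.equiv 2 (Fin K → ℝ)) y) := rfl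
  rw [hy, clm_apply_eq, euclid_norm_eq, euclid_norm_eq]
  exact h _

lemma specNorm_le_of_row_col (A : Matrix (Fin K) (Fin K) ℝ) (C : ℝ) (hC : 0 ≤ C)
    (hrow : ∀ i, ∑ j, |A i j| ≤ C) (hcol : ∀ j, ∑ i, |A i j| ≤ C) :
    specNorm A ≤ C := by
  apply specNorm_le_of_sqrt_bound A C hC
  intro x
  have per_i : ∀ i, (A.mulVec x i) ^ 2 ≤ C * ∑ j, |A i j| * x j ^ 2 := by
    intro i
    have hmv : A.mulVec x i = ∑ j, A i j * x j := rfl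
    have habs : |∑ j, A i j * x j| ≤ ∑ j, |A i j| * |x j| := by
      calc |∑ j, A i j * x j| ≤ ∑ j, |A i j * x j| := Finset.abs_sum_le_sum_abs _ _
        _ = ∑ j, |A i j| * |x j| := by
            apply Finset.sum_congr rfl; intro j _; rw [abs_mul]
    have h1 : (A.mulVec x i) ^ 2 ≤ (∑ j, |A i j| * |x j|) ^ 2 := by
      rw [hmv, ← sq_abs]
      apply pow_le_pow_left₀ (abs_nonneg _) habs
    have h2 : (∑ j, |A i j| * |x j|) ^ 2
        ≤ (∑ j, |A i j|) * (∑ j, |A i j| * x j ^ 2) := by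
      have hcs := Finset.sum_mul_sq_le_sq_mul_sq Finset.univ
        (fun j => Real.sqrt |A i j|) (fun j => Real.sqrt |A i j| * |x j|)
      have e1 : ∑ j, Real.sqrt |A i j| * (Real.sqrt |A i j| * |x j|)
          = ∑ j, |A i j| * |x j| := by
        apply Finset.sum_congr rfl; intro j _
        rw [← mul_assoc, Real.mul_self_sqrt (abs_nonneg _)]
      have e2 : ∑ j, (Real.sqrt |A i j|) ^ 2 = ∑ j, |A i j| := by
        apply Finset.sum_congr rfl; intro j _
        rw [Real.sq_sqrt (abs_nonneg _)]
      have e3 : ∑ j, (Real.sqrt |A i j| * |x j|) ^ 2 = ∑ j, |A i j| * x j ^ 2 := by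
        apply Finset.sum_congr rfl; intro j _
        rw [mul_pow, Real.sq_sqrt (abs_nonneg _), sq_abs]
      rw [e1, e2, e3] at hcs
      exact hcs
    have h3 : (∑ j, |A i j|) * (∑ j, |A i j| * x j ^ 2)
        ≤ C * ∑ j, |A i j| * x j ^ 2 := by
      apply mul_le_mul_of_nonneg_right (hrow i)
      exact Finset.sum_nonneg fun j _ => mul_nonneg (abs_nonneg _) (sq_nonneg _)
    linarith
  have key : ∑ i, (A.mulVec x i) ^ 2 ≤ C ^ 2 * ∑ j, x j ^ 2 := by
    calc ∑ i, (A.mulVec x i) ^ 2 ≤ ∑ i, C * ∑ j, |A i j| * x j ^ 2 :=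
          Finset.sum_le_sum fun i _ => per_i i
      _ = C * ∑ j, (∑ i, |A i j|) * x j ^ 2 := by
          rw [← Finset.mul_sum, Finset.sum_comm]
          congr 1
          apply Finset.sum_congr rfl; intro j _
          rw [Finset.sum_mul]
      _ ≤ C * ∑ j, C * x j ^ 2 := by
          apply mul_le_mul_of_nonneg_left _ hC
          apply Finset.sum_le_sum
          intro j _
          exact mul_le_mul_of_nonneg_right (hcol j) (sq_nonneg _)
      _ = C ^ 2 * ∑ j, x j ^ 2 := by rw [← Finset.mul_sum]; ring
  calc Real.sqrt (∑ i, (A.mulVec x i) ^ 2) ≤ Real.sqrt (C ^ 2 * ∑ j, x j ^ 2) :=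
        Real.sqrt_le_sqrt key
    _ = C * Real.sqrt (∑ j, x j ^ 2) := by
        rw [Real.sqrt_mul (sq_nonneg C), Real.sqrt_sq hC]

lemma master {K : ℕ} (hK : 0 < K)
    (P : Matrix (Fin K) (Fin K) ℝ)
    (πref π0 : Fin K → ℝ)
    (α lam β : ℝ) (hα : 0 ≤ α) (hlam : 0 ≤ lam) (hβ : 0 < β)
    (Atil : Matrix (Fin K) (Fin K) ℝ) (hA : ∀ i j, Atil i j = P i j - 1/2)
    (T : (Fin K → ℝ) → Fin K → ℝ)
    (hT : ∀ π, T π = softmax (fun i =>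
      α * Real.log (π i) + (1 - α) * Real.log (πref i)
        + β * ∑ k, P i k * (lam * π k + (1 - lam) * π0 k)))
    (hc : α + (β * lam / 2) * specNorm Atil < 1) :
    ∃ πstar : Fin K → ℝ, InSimplexInterior πstar ∧ T πstar = πstar ∧
      (∀ π, InSimplexInterior π → T π = π → π = πstar) ∧
      ∀ π1, InSimplexInterior π1 →
        Filter.Tendsto (fun t => T^[t] π1) Filter.atTop (nhds πstar) := by
  haveI : Nonempty (Fin K) := Fin.pos_iff_nonempty.mp hK
  have hspecnn : 0 ≤ specNorm Atil := norm_nonneg _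
  have hα1 : α < 1 := by
    have h2 : 0 ≤ (β * lam / 2) * specNorm Atil :=
      mul_nonneg (by positivity) hspecnn
    linarith
  set c : ℝ := α + (β * lam / 2) * specNorm Atil with hcdef
  have hcnn : 0 ≤ c := add_nonneg hα (mul_nonneg (by positivity) hspecnn)
  set Fp : (Fin K → ℝ) → (Fin K → ℝ) := fun z i =>
    α * z i + (1 - α) * Real.log (πref i)
      + β * ∑ k, P i k * (lam * softmax z k + (1 - lam) * π0 k) with hFp
  -- T ∘ softmax = softmax ∘ Fp
  have hTsm : ∀ z : Fin K → ℝ, T (softmax z) = softmax (Fp z) := by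
    intro z
    rw [hT]
    have heq : (fun i => α * Real.log (softmax z i) + (1 - α) * Real.log (πref i)
        + β * ∑ k, P i k * (lam * softmax z k + (1 - lam) * π0 k))
        = fun i => Fp z i + (-(α * Real.log (∑ k, Real.exp (z k)))) := by
      funext i
      rw [log_softmax]
      simp only [hFp]
      ring
    rw [heq, softmax_add_const]
  -- pointwise difference formula
  have hdiff : ∀ x y : Fin K → ℝ, ∀ i, Fp x i - Fp y i
      = α * (x i - y i)
        + (β * lam) * (Atil.mulVec (fun k => softmax x k - softmax y k) i) := by
    intro x y i
    have hw : ∑ k, (softmax x k - softmax y k) = 0 := by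
      rw [Finset.sum_sub_distrib, softmax_sum hK, softmax_sum hK]; ring
    have hPA : Atil.mulVec (fun k => softmax x k - softmax y k) i
        = ∑ k, P i k * (softmax x k - softmax y k) := by
      have e1 : Atil.mulVec (fun k => softmax x k - softmax y k) i
          = ∑ k, (P i k - 1/2) * (softmax x k - softmax y k) := by
        simp only [Matrix.mulVec, dotProduct]
        refine Finset.sum_congr rfl fun k _ => ?_
        show Atil i k * (softmax x k - softmax y k) = _
        rw [hA]
      have e2 : ∑ k, (P i k - 1/2) * (softmax x k - softmax y k)
          = (∑ k, P i k * (softmax x k - softmax y k))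
            - (1/2) * ∑ k, (softmax x k - softmax y k) := by
        rw [Finset.mul_sum, ← Finset.sum_sub_distrib]
        exact Finset.sum_congr rfl fun k _ => by ring
      rw [e1, e2, hw]
      ring
    have hS : (∑ k, P i k * (lam * softmax x k + (1-lam) * π0 k))
        - (∑ k, P i k * (lam * softmax y k + (1-lam) * π0 k))
        = lam * ∑ k, P i k * (softmax x k - softmax y k) := by
      rw [← Finset.sum_sub_distrib, Finset.mul_sum]
      exact Finset.sum_congr rfl fun k _ => by ring
    simp only [hFp]
    rw [hPA]
    linear_combination β * hS
  -- the contraction map on Euclidean space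
  set F : EuclideanSpace ℝ (Fin K) → EuclideanSpace ℝ (Fin K) :=
    fun u => (WithLp.equiv 2 (Fin K → ℝ)).symm (Fp ((WithLp.equiv 2 (Fin K → ℝ)) u))
    with hF
  have hlip : ∀ X Y : EuclideanSpace ℝ (Fin K), dist (F X) (F Y) ≤ c * dist X Y := by
    intro X Y
    rw [dist_eq_norm, dist_eq_norm]
    set x : Fin K → ℝ := (WithLp.equiv 2 (Fin K → ℝ)) X with hx
    set y : Fin K → ℝ := (WithLp.equiv 2 (Fin K → ℝ)) Y with hy
    set w : Fin K → ℝ := fun k => softmax x k - softmax y k with hwdef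
    have hsplit : F X - F Y
        = α • (X - Y)
          + (β * lam) • ((WithLp.equiv 2 (Fin K → ℝ)).symm (Atil.mulVec w)) := by
      have := funext (fun i => hdiff x y i)
      exact congrArg (WithLp.equiv 2 (Fin K → ℝ)).symm this
    have hXY : ‖X - Y‖ = Real.sqrt (∑ i, (x i - y i) ^ 2) := by
      have : X - Y = (WithLp.equiv 2 (Fin K → ℝ)).symm (fun i => x i - y i) := rfl
      rw [this, euclid_norm_eq]
    have hAw : ‖(WithLp.equiv 2 (Fin K → ℝ)).symm (Atil.mulVec w)‖
        ≤ specNorm Atil * ((1/2) * ‖X - Y‖) := by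
      rw [euclid_norm_eq]
      calc Real.sqrt (∑ i, (Atil.mulVec w i) ^ 2)
          ≤ specNorm Atil * Real.sqrt (∑ i, w i ^ 2) := mulVec_sqrt_le _ _
        _ ≤ specNorm Atil * ((1/2) * ‖X - Y‖) := by
            apply mul_le_mul_of_nonneg_left _ hspecnn
            rw [hXY]
            exact softmax_lipschitz hK x y
    calc ‖F X - F Y‖
        ≤ ‖α • (X - Y)‖
          + ‖(β * lam) • ((WithLp.equiv 2 (Fin K → ℝ)).symm (Atil.mulVec w))‖ := by
          rw [hsplit]; exact norm_add_le _ _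
      _ = α * ‖X - Y‖
          + (β * lam) * ‖(WithLp.equiv 2 (Fin K → ℝ)).symm (Atil.mulVec w)‖ := by
          rw [norm_smul, norm_smul, Real.norm_eq_abs, Real.norm_eq_abs,
            abs_of_nonneg hα, abs_of_nonneg (mul_nonneg hβ.le hlam)]
      _ ≤ α * ‖X - Y‖ + (β * lam) * (specNorm Atil * ((1/2) * ‖X - Y‖)) := by
          have := mul_le_mul_of_nonneg_left hAw (mul_nonneg hβ.le hlam)
          linarith
      _ = c * ‖X - Y‖ := by rw [hcdef]; ring
  set cnn : NNReal := ⟨c, hcnn⟩ with hcnndef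
  have hcontr : ContractingWith cnn F := by
    constructor
    · rw [← NNReal.coe_lt_coe]
      push_cast
      exact hc
    · exact LipschitzWith.of_dist_le_mul fun X Y => hlip X Y
  set ustar : EuclideanSpace ℝ (Fin K) := ContractingWith.fixedPoint F hcontr with hustar
  have hufix : F ustar = ustar := hcontr.fixedPoint_isFixedPt
  set zstar : Fin K → ℝ := (WithLp.equiv 2 (Fin K → ℝ)) ustar with hzstar
  have hFpfix : Fp zstar = zstar := congrArg (WithLp.equiv 2 (Fin K → ℝ)) hufix
  refine ⟨softmax zstar, ⟨fun i => softmax_pos hK _ i, softmax_sum hK _⟩, ?_, ?_, ?_⟩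
  · rw [hTsm, hFpfix]
  · -- uniqueness
    intro π hπ hfix
    set L : Fin K → ℝ := fun i => Real.log (π i) with hL
    have hsm : softmax L = π := softmax_log hK hπ.1 hπ.2
    have h1 : softmax (Fp L) = π := by
      rw [← hTsm, hsm, hfix]
    set L0 : ℝ := Real.log (∑ k, Real.exp (Fp L k)) with hL0
    have hlog : ∀ i, L i = Fp L i - L0 := by
      intro i
      rw [hL]
      simp only
      rw [← congrFun h1 i, log_softmax]
    have h1α : (1:ℝ) - α ≠ 0 := by intro h; linarith
    set cst : ℝ := L0 / (1 - α) with hcst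
    have hshift : Fp (fun i => L i + cst) = fun i => Fp L i + α * cst := by
      funext i
      simp only [hFp]
      rw [softmax_add_const]
      ring
    have hufix2 : Fp (fun i => L i + cst) = fun i => L i + cst := by
      rw [hshift]
      funext i
      have : Fp L i = L i + L0 := by rw [hlog i]; ring
      rw [this, hcst]
      field_simp
      ring
    have huu : F ((WithLp.equiv 2 (Fin K → ℝ)).symm (fun i => L i + cst))
        = (WithLp.equiv 2 (Fin K → ℝ)).symm (fun i => L i + cst) :=
      congrArg (WithLp.equiv 2 (Fin K → ℝ)).symm hufix2
    have hequ : (WithLp.equiv 2 (Fin K → ℝ)).symm (fun i => L i + cst) = ustar :=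
      hcontr.fixedPoint_unique huu
    have : zstar = fun i => L i + cst := by
      rw [hzstar, ← hequ]
      rfl
    rw [this]
    rw [show (fun i => L i + cst) = fun i => L i + cst from rfl]
    rw [← hsm]
    exact (softmax_add_const L cst).symm
  · -- convergence
    intro π1 h1
    set X1 : EuclideanSpace ℝ (Fin K) :=
      (WithLp.equiv 2 (Fin K → ℝ)).symm (fun i => Real.log (π1 i)) with hX1
    have hiter : ∀ t : ℕ,
        T^[t] π1 = softmax ((WithLp.equiv 2 (Fin K → ℝ)) (F^[t] X1)) := by
      intro t
      induction t with
      | zero =>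
        simp only [Function.iterate_zero, id_eq]
        exact (softmax_log hK h1.1 h1.2).symm
      | succ n ih =>
        rw [Function.iterate_succ_apply', Function.iterate_succ_apply', ih, hTsm]
        rfl
    have htend : Filter.Tendsto (fun n => F^[n] X1) Filter.atTop (nhds ustar) :=
      hcontr.tendsto_iterate_fixedPoint X1
    have hcont : Continuous (fun yy : EuclideanSpace ℝ (Fin K) =>
        softmax ((WithLp.equiv 2 (Fin K → ℝ)) yy)) := by
      apply continuous_pi
      intro i
      apply Continuous.div
      · exact Real.continuous_exp.comp
          ((continuous_apply i).comp (PiLp.continuous_ofLp 2 (fun _ : Fin K => ℝ)))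
      · apply continuous_finset_sum
        intro k _
        exact Real.continuous_exp.comp
          ((continuous_apply k).comp (PiLp.continuous_ofLp 2 (fun _ : Fin K => ℝ)))
      · intro yy
        exact ne_of_gt (sumexp_pos hK _)
    have := (hcont.tendsto ustar).comp htend
    refine this.congr ?_
    intro t
    exact (hiter t).symm

/-- If `α + (βλ/2)‖Ã‖₂ < 1` (with `Ã = P − (1/2)·11ᵀ`), the MRS-IPO dynamics have a
unique interior fixed point to which iterates converge from any interior initialization; the same
holds under the sparsity condition `α + βλd/4 < 1`. -/
theorem mrs_ipo_contraction_convergence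
    (K : ℕ) (hK : 0 < K)
    (P : Matrix (Fin K) (Fin K) ℝ) (hP : IsPrefMatrix P)
    (πref π0 : Fin K → ℝ) (href : InSimplexInterior πref) (h0 : InSimplexInterior π0)
    (α lam β : ℝ) (hα : 0 ≤ α) (hα' : α ≤ 1) (hlam : 0 ≤ lam) (hlam' : lam ≤ 1) (hβ : 0 < β)
    (Atil : Matrix (Fin K) (Fin K) ℝ) (hA : ∀ i j, Atil i j = P i j - 1/2)
    (T : (Fin K → ℝ) → Fin K → ℝ)
    (hT : ∀ π, T π = softmax (fun i =>
      α * Real.log (π i) + (1 - α) * Real.log (πref i)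
        + β * ∑ k, P i k * (lam * π k + (1 - lam) * π0 k))) :
    (α + (β * lam / 2) * specNorm Atil < 1 →
      ∃ πstar : Fin K → ℝ, InSimplexInterior πstar ∧ T πstar = πstar ∧
        (∀ π, InSimplexInterior π → T π = π → π = πstar) ∧
        ∀ π1, InSimplexInterior π1 →
          Filter.Tendsto (fun t => T^[t] π1) Filter.atTop (nhds πstar)) ∧
    (∀ d : ℕ, (∀ i, (Finset.univ.filter (fun j => Atil i j ≠ 0)).card ≤ d) →
      α + β * lam * d / 4 < 1 →
      ∃ πstar : Fin K → ℝ, InSimplexInterior πstar ∧ T πstar = πstar ∧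
        (∀ π, InSimplexInterior π → T π = π → π = πstar) ∧
        ∀ π1, InSimplexInterior π1 →
          Filter.Tendsto (fun t => T^[t] π1) Filter.atTop (nhds πstar)) := by
  constructor
  · intro hc
    exact master hK P πref π0 α lam β hα hlam hβ Atil hA T hT hc
  · intro d hd hcond
    apply master hK P πref π0 α lam β hα hlam hβ Atil hA T hT
    -- show the spectral condition from sparsity
    have hentry : ∀ i j, |Atil i j| ≤ 1/2 := by
      intro i j
      rw [hA]
      rcases hP.1 i j with ⟨h1, h2⟩
      rw [abs_le]
      constructor <;> linarith
    have hanti : ∀ i j, Atil j i = - Atil i j := by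
      intro i j
      rcases eq_or_ne i j with rfl | hne
      · rw [hA, hP.2.1]; ring
      · rw [hA, hA]
        have := hP.2.2 i j hne
        linarith
    have hrow : ∀ i, ∑ j, |Atil i j| ≤ (d:ℝ)/2 := by
      intro i
      have h1 : ∑ j, |Atil i j|
          = ∑ j ∈ Finset.univ.filter (fun j => Atil i j ≠ 0), |Atil i j| := by
        symm
        apply Finset.sum_subset (Finset.filter_subset _ _)
        intro j _ hj
        simp only [Finset.mem_filter, Finset.mem_univ, true_and, not_not] at hj
        rw [hj, abs_zero]
      rw [h1]
      calc ∑ j ∈ Finset.univ.filter (fun j => Atil i j ≠ 0), |Atil i j|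
          ≤ (Finset.univ.filter (fun j => Atil i j ≠ 0)).card • (1/2 : ℝ) :=
            Finset.sum_le_card_nsmul _ _ _ (fun j _ => hentry i j)
        _ = ((Finset.univ.filter (fun j => Atil i j ≠ 0)).card : ℝ) * (1/2) := by
            rw [nsmul_eq_mul]
        _ ≤ (d:ℝ) * (1/2) := by
            apply mul_le_mul_of_nonneg_right _ (by norm_num)
            exact_mod_cast hd i
        _ = (d:ℝ)/2 := by ring
    have hcol : ∀ j, ∑ i, |Atil i j| ≤ (d:ℝ)/2 := by
      intro j
      have : ∑ i, |Atil i j| = ∑ i, |Atil j i| := by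
        apply Finset.sum_congr rfl
        intro i _
        rw [hanti j i, abs_neg]
      rw [this]
      exact hrow j
    have hspec : specNorm Atil ≤ (d:ℝ)/2 :=
      specNorm_le_of_row_col Atil ((d:ℝ)/2) (by positivity) hrow hcol
    calc α + (β * lam / 2) * specNorm Atil
        ≤ α + (β * lam / 2) * ((d:ℝ)/2) := by
          have := mul_le_mul_of_nonneg_left hspec (show (0:ℝ) ≤ β * lam / 2 by positivity)
          linarith
      _ = α + β * lam * d / 4 := by ring
      _ < 1 := hcond
end

section
/- Let P be a strictly strongly transitive K×K preference matrix with order 1 ≻ 2 ≻ ⋯ ≻ K, let π_0, π_ref, π_1 ∈ Δ_K° be full-support, let λ ∈ [0,1) and β > 0, and consider the MRS-IPO dynamics with α = 1: π_{t+1} = softmax(log π_t + β·P(λπ_t + (1−λ)π_0)). Let r_{t,i} = log(π_{t,i}/π_{t,i+1}) and δ_i = (1−λ)·Σ_{j=1}^K π_{0,j}(P_{ij} − P_{i+1,j}) > 0. Then r_{t+1,i} ≥ r_{t,i} + βλδ_i for every t ≥ 1 and i ∈ {1,…,K−1}; consequently π_t → e_1 (the vertex concentrating all mass on response 1) as t →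 ∞, the Shannon entropy H(π_t) → 0, and there exists a finite T such that H(π_{t+1}) < H(π_t) for all t ≥ T. -/
open Finset Filter

/-- Strict strong transitivity. -/
def IsStrictlyStronglyTransitive {K : ℕ} (P : Matrix (Fin K) (Fin K) ℝ) : Prop :=
  IsStronglyTransitive P ∧
  ∀ i j : Fin K, (j : ℕ) = (i : ℕ) + 1 → ∃ k, P j k < P i k

/-- Shannon entropy of a probability vector. -/
noncomputable def shannonEntropy {K : ℕ} (π : Fin K → ℝ) : ℝ :=
  -∑ i, π i * Real.log (π i)

lemma softmax_interior {K : ℕ} (hK : 0 < K) (z : Fin K → ℝ) : InSimplexInterior (softmax z) := by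
  haveI : Nonempty (Fin K) := ⟨⟨0, hK⟩⟩
  have hsum : 0 < ∑ k, Real.exp (z k) :=
    Finset.sum_pos (fun k _ => Real.exp_pos _) Finset.univ_nonempty
  refine ⟨fun i => div_pos (Real.exp_pos _) hsum, ?_⟩
  simp [softmax, ← Finset.sum_div, div_self hsum.ne']

lemma prefDom {K : ℕ} {P : Matrix (Fin K) (Fin K) ℝ} (hP : IsPrefMatrix P)
    (hST : IsStronglyTransitive P) {i j : Fin K} (hij : i < j) (k : Fin K) :
    P j k ≤ P i k := by
  obtain ⟨hbound, hdiag, hanti⟩ := hP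
  obtain ⟨h12, hmax⟩ := hST
  rcases lt_trichotomy k i with hk | hk | hk
  · have h1 : P k i ≤ P k j := le_trans (le_max_left _ _) (hmax k i j hk hij)
    have e1 := hanti k i (ne_of_lt hk)
    have e2 := hanti k j (ne_of_lt (hk.trans hij))
    linarith
  · subst hk
    have e1 := hanti k j (ne_of_lt hij)
    have := h12 k j hij
    have := hdiag k
    linarith
  · rcases lt_trichotomy k j with hk2 | hk2 | hk2
    · have e1 := hanti k j (ne_of_lt hk2)
      have := h12 k j hk2
      have := h12 i k hk
      linarith
    · subst hk2
      have := hdiag k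
      have := h12 i k hij
      linarith
    · exact le_trans (le_max_right _ _) (hmax i j k hij hk2)

set_option maxHeartbeats 1000000 in
/-- True collapse of the fully self-referential (α = 1) MRS-IPO dynamics under a
strictly strongly transitive preference matrix: adjacent log-ratios grow by at least βλδ_i each
round, the policy converges to the vertex e₁, the entropy tends to 0, and the entropy is
eventually strictly decreasing. -/
theorem mrs_ipo_alpha_one_true_collapse
    (K : ℕ) (hK : 2 ≤ K)
    (P : Matrix (Fin K) (Fin K) ℝ)
    (hP : IsPrefMatrix P) (hSST : IsStrictlyStronglyTransitive P)
    (π0 πref : Fin K → ℝ) (h0 : InSimplexInterior π0) (href : InSimplexInterior πref)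
    (lam β : ℝ) (hlam : 0 ≤ lam) (hlam' : lam < 1) (hβ : 0 < β)
    (π : ℕ → Fin K → ℝ) (hinit : InSimplexInterior (π 1))
    (hrec : ∀ t, 1 ≤ t → π (t + 1) = softmax (fun i =>
      Real.log (π t i) + β * ∑ k, P i k * (lam * π t k + (1 - lam) * π0 k))) :
    (∀ t, 1 ≤ t → ∀ i j : Fin K, (j : ℕ) = (i : ℕ) + 1 →
      Real.log (π t i / π t j)
          + β * lam * ((1 - lam) * ∑ k, π0 k * (P i k - P j k))
        ≤ Real.log (π (t + 1) i / π (t + 1) j)) ∧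
    Tendsto (fun t => π t) atTop
      (nhds (fun i : Fin K => if (i : ℕ) = 0 then (1:ℝ) else 0)) ∧
    Tendsto (fun t => shannonEntropy (π t)) atTop (nhds 0) ∧
    ∃ T : ℕ, ∀ t, T ≤ t → shannonEntropy (π (t + 1)) < shannonEntropy (π t) := by
  have hK0 : 0 < K := by omega
  haveI : NeZero K := ⟨hK0.ne'⟩
  have h1v : ((1 : Fin K) : ℕ) = 1 := by
    rw [Fin.val_one']
    exact Nat.mod_eq_of_lt (by omega)
  have h1ne0 : (1 : Fin K) ≠ 0 := by
    intro h
    have := congrArg Fin.val h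
    rw [h1v] at this
    simp at this
  have h01 : (0 : Fin K) < 1 := by
    rw [Fin.lt_def, Fin.val_zero, h1v]; norm_num
  -- positivity / simplex membership for all t ≥ 1
  have hpos : ∀ t, 1 ≤ t → InSimplexInterior (π t) := by
    intro t ht
    induction t, ht using Nat.le_induction with
    | base => exact hinit
    | succ n hn ih => rw [hrec n hn]; exact softmax_interior hK0 _
  set s : ℕ → Fin K → ℝ := fun t i => ∑ k, P i k * (lam * π t k + (1 - lam) * π0 k) with hs
  -- explicit form of the recursion
  have hq : ∀ t, 1 ≤ t → ∀ i, π (t+1) i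
      = π t i * Real.exp (β * s t i) / (∑ k, π t k * Real.exp (β * s t k)) := by
    intro t ht i
    have hexp : ∀ k, Real.exp (Real.log (π t k) + β * s t k)
        = π t k * Real.exp (β * s t k) := fun k => by
      rw [Real.exp_add, Real.exp_log ((hpos t ht).1 k)]
    rw [hrec t ht]
    simp only [softmax, hs, hexp]
    exact congrArg₂ (· / ·) (hexp i) (Finset.sum_congr rfl fun k _ => hexp k)
  have hZ : ∀ t, 1 ≤ t → 0 < ∑ k, π t k * Real.exp (β * s t k) := by
    intro t ht
    haveI : Nonempty (Fin K) := ⟨⟨0, hK0⟩⟩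
    exact Finset.sum_pos (fun k _ => mul_pos ((hpos t ht).1 k) (Real.exp_pos _))
      Finset.univ_nonempty
  -- the multiplicative ratio recursion
  have hval : ∀ t, 1 ≤ t → ∀ i j : Fin K,
      π (t+1) i / π (t+1) j = (π t i / π t j) * Real.exp (β * (s t i - s t j)) := by
    intro t ht i j
    have hZt := hZ t ht
    have hpi := (hpos t ht).1 i
    have hpj := (hpos t ht).1 j
    rw [hq t ht i, hq t ht j, mul_sub, Real.exp_sub]
    field_simp
  have hlogratio : ∀ t, 1 ≤ t → ∀ i j : Fin K,
      Real.log (π (t+1) i / π (t+1) j)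
        = Real.log (π t i / π t j) + β * (s t i - s t j) := by
    intro t ht i j
    have hpi := (hpos t ht).1 i
    have hpj := (hpos t ht).1 j
    rw [hval t ht i j, Real.log_mul (by positivity) (Real.exp_ne_zero _), Real.log_exp]
  -- decomposition of the score gap
  have hsdiff : ∀ t, ∀ i j : Fin K,
      s t i - s t j = lam * (∑ k, π t k * (P i k - P j k))
        + (1 - lam) * (∑ k, π0 k * (P i k - P j k)) := by
    intro t i j
    simp only [hs, Finset.mul_sum, ← Finset.sum_sub_distrib, ← Finset.sum_add_distrib]
    exact Finset.sum_congr rfl (fun k _ => by ring)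
  have hA : ∀ t, 1 ≤ t → ∀ i j : Fin K, i < j → 0 ≤ ∑ k, π t k * (P i k - P j k) :=
    fun t ht i j hij => Finset.sum_nonneg (fun k _ =>
      mul_nonneg ((hpos t ht).1 k).le (by linarith [prefDom hP hSST.1 hij k]))
  have hB0 : ∀ i j : Fin K, i < j → 0 ≤ ∑ k, π0 k * (P i k - P j k) :=
    fun i j hij => Finset.sum_nonneg (fun k _ =>
      mul_nonneg (h0.1 k).le (by linarith [prefDom hP hSST.1 hij k]))
  have hsmono : ∀ t, 1 ≤ t → ∀ i j : Fin K, i < j → s t j ≤ s t i := by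
    intro t ht i j hij
    have := hsdiff t i j
    have h1 := hA t ht i j hij
    have h2 := hB0 i j hij
    nlinarith
  -- Part 1
  have part1 : ∀ t, 1 ≤ t → ∀ i j : Fin K, (j : ℕ) = (i : ℕ) + 1 →
      Real.log (π t i / π t j)
          + β * lam * ((1 - lam) * ∑ k, π0 k * (P i k - P j k))
        ≤ Real.log (π (t + 1) i / π (t + 1) j) := by
    intro t ht i j hadj
    have hij : i < j := by rw [Fin.lt_def]; omega
    rw [hlogratio t ht i j]
    have hd := hsdiff t i j
    have hA' := hA t ht i j hij
    have hB' := hB0 i j hij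
    have h1 : 0 ≤ β * lam * (∑ k, π t k * (P i k - P j k)) :=
      mul_nonneg (mul_nonneg hβ.le hlam) hA'
    have h2 : 0 ≤ β * ((1-lam) * (1-lam)) * (∑ k, π0 k * (P i k - P j k)) :=
      mul_nonneg (mul_nonneg hβ.le (mul_nonneg (by linarith) (by linarith))) hB'
    nlinarith
  -- the adjacent (0,1) gap
  set D : ℝ := (1 - lam) * ∑ k, π0 k * (P 0 k - P 1 k) with hD
  have hDpos : 0 < D := by
    obtain ⟨k₀, hk₀⟩ := hSST.2 0 1 (by rw [h1v]; simp)
    have : 0 < ∑ k, π0 k * (P 0 k - P 1 k) :=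
      Finset.sum_pos' (fun k _ => mul_nonneg (h0.1 k).le
        (by linarith [prefDom hP hSST.1 h01 k]))
        ⟨k₀, Finset.mem_univ _, mul_pos (h0.1 k₀) (by linarith)⟩
    have : 0 < 1 - lam := by linarith
    positivity
  have hstep : ∀ t, 1 ≤ t → ∀ j : Fin K, j ≠ 0 → D ≤ s t 0 - s t j := by
    intro t ht j hj
    have hjv : (j : ℕ) ≠ 0 := fun h => hj (Fin.ext (by simp [h]))
    have h1 : s t 0 - s t 1 = lam * (∑ k, π t k * (P 0 k - P 1 k)) + D := by
      rw [hsdiff t 0 1, hD]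
    have hA' := hA t ht 0 1 h01
    rcases eq_or_ne j 1 with rfl | hj1
    · nlinarith
    · have h1j : (1 : Fin K) < j := by
        rw [Fin.lt_def, h1v]
        have : (j:ℕ) ≠ 1 := fun h => hj1 (Fin.ext (by rw [h, h1v]))
        omega
      have h2 := hsmono t ht 1 j h1j
      nlinarith
  -- linear growth of log π_t 0 / π_t j
  have hgrow : ∀ j : Fin K, j ≠ 0 → ∀ t : ℕ, 1 ≤ t →
      Real.log (π 1 0 / π 1 j) + ((t:ℝ) - 1) * (β * D)
        ≤ Real.log (π t 0 / π t j) := by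
    intro j hj t ht
    induction t, ht using Nat.le_induction with
    | base => simp
    | succ n hn ih =>
      have h1 := hlogratio n hn 0 j
      have h2 : β * D ≤ β * (s n 0 - s n j) :=
        mul_le_mul_of_nonneg_left (hstep n hn j hj) hβ.le
      push_cast
      push_cast at ih
      linarith
  -- ratios tend to zero
  have hrat0 : ∀ j : Fin K, j ≠ 0 → Tendsto (fun t => π t j / π t 0) atTop (nhds 0) := by
    intro j hj
    set C : ℝ := Real.log (π 1 0 / π 1 j) with hC
    apply squeeze_zero' (g := fun t : ℕ => Real.exp (-(C + ((t:ℝ) - 1) * (β * D))))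
    · filter_upwards [eventually_ge_atTop 1] with t ht
      exact (div_pos ((hpos t ht).1 j) ((hpos t ht).1 0)).le
    · filter_upwards [eventually_ge_atTop 1] with t ht
      have hdp : 0 < π t j / π t 0 := div_pos ((hpos t ht).1 j) ((hpos t ht).1 0)
      have h1 := hgrow j hj t ht
      have h2 : Real.log (π t j / π t 0) = - Real.log (π t 0 / π t j) := by
        rw [← Real.log_inv, inv_div]
      calc π t j / π t 0 = Real.exp (Real.log (π t j / π t 0)) := (Real.exp_log hdp).symm
        _ ≤ Real.exp (-(C + ((t:ℝ) - 1) * (β * D))) := Real.exp_le_exp.mpr (by linarith)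
    · have h1 : Tendsto (fun t : ℕ => (t:ℝ) - 1) atTop atTop :=
        tendsto_atTop_add_const_right _ (-1) tendsto_natCast_atTop_atTop
      have h2 : Tendsto (fun t : ℕ => C + ((t:ℝ) - 1) * (β * D)) atTop atTop :=
        tendsto_atTop_add_const_left _ C (h1.atTop_mul_const (mul_pos hβ hDpos))
      exact Real.tendsto_exp_atBot.comp (tendsto_neg_atTop_atBot.comp h2)
  -- coordinates tend to their limits
  have hj0 : ∀ j : Fin K, j ≠ 0 → Tendsto (fun t => π t j) atTop (nhds 0) := by
    intro j hj
    apply squeeze_zero' (g := fun t => π t j / π t 0) ?_ ?_ (hrat0 j hj)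
    · filter_upwards [eventually_ge_atTop 1] with t ht
      exact ((hpos t ht).1 j).le
    · filter_upwards [eventually_ge_atTop 1] with t ht
      have hp0 : 0 < π t 0 := (hpos t ht).1 0
      have hle1 : π t 0 ≤ 1 := by
        have := (hpos t ht).2
        have h1 : π t 0 ≤ ∑ k, π t k :=
          Finset.single_le_sum (fun k _ => ((hpos t ht).1 k).le) (Finset.mem_univ _)
        linarith
      rw [le_div_iff₀ hp0]
      nlinarith [((hpos t ht).1 j).le]
  have h0to1 : Tendsto (fun t => π t 0) atTop (nhds 1) := by
    have hsum : (fun t => 1 - ∑ j ∈ Finset.univ.erase (0 : Fin K), π t j)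
        =ᶠ[atTop] (fun t => π t 0) := by
      filter_upwards [eventually_ge_atTop 1] with t ht
      have h1 : ∑ j ∈ Finset.univ.erase (0 : Fin K), π t j + π t 0 = ∑ j, π t j :=
        Finset.sum_erase_add _ _ (Finset.mem_univ _)
      rw [(hpos t ht).2] at h1
      linarith
    have h2 : Tendsto (fun t => ∑ j ∈ Finset.univ.erase (0 : Fin K), π t j) atTop (nhds 0) := by
      have := tendsto_finset_sum (Finset.univ.erase (0 : Fin K))
        (fun j hjm => hj0 j (Finset.ne_of_mem_erase hjm))
      simpa using this
    have h3 : Tendsto (fun t => 1 - ∑ j ∈ Finset.univ.erase (0 : Fin K), π t j) atTop (nhds 1) := by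
      have h4 := (tendsto_const_nhds : Tendsto (fun _ : ℕ => (1:ℝ)) atTop (nhds 1)).sub h2
      simpa using h4
    exact h3.congr' hsum
  have hconv : Tendsto (fun t => π t) atTop
      (nhds (fun i : Fin K => if (i : ℕ) = 0 then (1:ℝ) else 0)) := by
    rw [tendsto_pi_nhds]
    intro i
    rcases eq_or_ne i 0 with rfl | hi
    · simpa using h0to1
    · have hiv : ((i:ℕ) = 0) = False := by
        simp only [eq_iff_iff, iff_false]
        exact fun h => hi (Fin.ext (by simp [h]))
      simp only [hiv, if_false]
      exact hj0 i hi
  -- entropy tends to zero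
  have hHcont : Continuous (fun p : Fin K → ℝ => shannonEntropy p) := by
    unfold shannonEntropy
    exact (continuous_finset_sum _ (fun i _ =>
      Real.continuous_mul_log.comp (continuous_apply i))).neg
  have he1 : shannonEntropy (fun i : Fin K => if (i : ℕ) = 0 then (1:ℝ) else 0) = 0 := by
    unfold shannonEntropy
    rw [Finset.sum_eq_zero, neg_zero]
    intro i _
    rcases eq_or_ne ((i:ℕ)) 0 with h | h <;> simp [h]
  have hHlim : Tendsto (fun t => shannonEntropy (π t)) atTop (nhds 0) := by
    have := (hHcont.tendsto _).comp hconv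
    rw [he1] at this
    exact this
  refine ⟨part1, hconv, hHlim, ?_⟩
  -- Part 4: eventual strict decrease
  have hE1 : ∀ᶠ t in atTop, ∀ j : Fin K, j ≠ 0 → π t j < π t 0 := by
    rw [Filter.eventually_all]
    intro j
    rcases eq_or_ne j 0 with rfl | hj
    · filter_upwards with t h; exact absurd rfl h
    · have := (h0to1.sub (hj0 j hj)).eventually (eventually_gt_nhds (by norm_num : (0:ℝ) < 1 - 0))
      filter_upwards [this] with t ht
      intro _
      linarith [ht]
  have hE2 : ∀ᶠ t in atTop, Real.exp (-(β * D)) < π t 0 :=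
    h0to1.eventually (eventually_gt_nhds
      (Real.exp_lt_one_iff.mpr (by nlinarith)))
  obtain ⟨T, hT⟩ := eventually_atTop.mp ((hE1.and hE2).and (eventually_ge_atTop 1))
  refine ⟨T, fun t htT => ?_⟩
  obtain ⟨⟨hsorted, hbig⟩, ht1⟩ := hT t htT
  -- notation
  have hppos := (hpos t ht1).1
  have hpsum := (hpos t ht1).2
  have hq1 : InSimplexInterior (π (t+1)) := hpos (t+1) (by omega)
  have hqpos := hq1.1
  have hqsum := hq1.2
  set Z : ℝ := ∑ k, π t k * Real.exp (β * s t k) with hZdef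
  have hZpos : 0 < Z := hZ t ht1
  -- q j < p j for j ≠ 0
  have hqlt : ∀ j : Fin K, j ≠ 0 → π (t+1) j < π t j := by
    intro j hj
    have h1 : Real.exp (β * s t j) < Z := by
      have hst := hstep t ht1 j hj
      have h2 : π t 0 * Real.exp (β * s t 0) ≤ Z := by
        rw [hZdef]
        exact Finset.single_le_sum (f := fun k => π t k * Real.exp (β * s t k))
          (fun k _ => (mul_pos (hppos k) (Real.exp_pos _)).le) (Finset.mem_univ _)
      have h3 : Real.exp (β * s t j) < π t 0 * Real.exp (β * s t 0) := by
        have h4 : Real.exp (β * s t j) = Real.exp (-(β * (s t 0 - s t j))) *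
            Real.exp (β * s t 0) := by
          rw [← Real.exp_add]; ring_nf
        rw [h4]
        apply mul_lt_mul_of_pos_right _ (Real.exp_pos _)
        calc Real.exp (-(β * (s t 0 - s t j))) ≤ Real.exp (-(β * D)) := by
              apply Real.exp_le_exp.mpr
              have := mul_le_mul_of_nonneg_left hst hβ.le
              linarith
          _ < π t 0 := hbig
      linarith
    rw [hq t ht1 j, ← hZdef, div_lt_iff₀ hZpos]
    exact mul_lt_mul_of_pos_left h1 (hppos j)
  -- Gibbs inequality
  have hgibbs : 0 ≤ ∑ k, π (t+1) k * Real.log (π (t+1) k / π t k) := by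
    have h1 : ∑ k, π (t+1) k * Real.log (π t k / π (t+1) k) ≤ ∑ k, (π t k - π (t+1) k) := by
      apply Finset.sum_le_sum
      intro k _
      have hdk : 0 < π t k / π (t+1) k := div_pos (hppos k) (hqpos k)
      have := Real.log_le_sub_one_of_pos hdk
      have h2 : π (t+1) k * (π t k / π (t+1) k - 1) = π t k - π (t+1) k := by
        rw [mul_sub, mul_one, ← mul_div_assoc, mul_div_cancel_left₀ _ (hqpos k).ne']
      nlinarith [hqpos k]
    have h2 : ∑ k, (π t k - π (t+1) k) = 0 := by
      rw [Finset.sum_sub_distrib, hpsum, hqsum]; ring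
    have h3 : ∀ k : Fin K, π (t+1) k * Real.log (π (t+1) k / π t k)
        = -(π (t+1) k * Real.log (π t k / π (t+1) k)) := by
      intro k
      rw [Real.log_div (hqpos k).ne' (hppos k).ne', Real.log_div (hppos k).ne' (hqpos k).ne']
      ring
    have h4 : ∑ k, π (t+1) k * Real.log (π (t+1) k / π t k)
        = -∑ k, π (t+1) k * Real.log (π t k / π (t+1) k) := by
      rw [← Finset.sum_neg_distrib]
      exact Finset.sum_congr rfl (fun k _ => h3 k)
    rw [h4]
    linarith [h1.trans_eq h2]
  -- entropy difference identity
  have hiden : shannonEntropy (π t) - shannonEntropy (π (t+1))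
      = (∑ k, π (t+1) k * Real.log (π (t+1) k / π t k))
        + ∑ k, (π (t+1) k - π t k) * Real.log (π t k) := by
    unfold shannonEntropy
    rw [← Finset.sum_add_distrib]
    have h1 : ∀ k : Fin K, π (t+1) k * Real.log (π (t+1) k / π t k)
        + (π (t+1) k - π t k) * Real.log (π t k)
        = π (t+1) k * Real.log (π (t+1) k) - π t k * Real.log (π t k) := by
      intro k
      rw [Real.log_div (hqpos k).ne' (hppos k).ne']
      ring
    rw [Finset.sum_congr rfl (fun k _ => h1 k), Finset.sum_sub_distrib]
    ring
  -- positivity of the cross term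
  have hcross : 0 < ∑ k, (π (t+1) k - π t k) * Real.log (π t k) := by
    have hsum0 : ∑ k, (π (t+1) k - π t k) = 0 := by
      rw [Finset.sum_sub_distrib, hpsum, hqsum]; ring
    have hrw : ∑ k, (π (t+1) k - π t k) * Real.log (π t k)
        = ∑ k, (π (t+1) k - π t k) * (Real.log (π t k) - Real.log (π t 0)) := by
      simp only [mul_sub, Finset.sum_sub_distrib, ← Finset.sum_mul, hsum0, zero_mul, sub_zero]
    rw [hrw]
    have hterm : ∀ j : Fin K, j ≠ 0 →
        0 < (π (t+1) j - π t j) * (Real.log (π t j) - Real.log (π t 0)) := by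
      intro j hj
      have h1 : π (t+1) j - π t j < 0 := by linarith [hqlt j hj]
      have h2 : Real.log (π t j) - Real.log (π t 0) < 0 := by
        have := Real.log_lt_log (hppos j) (hsorted j hj)
        linarith
      exact mul_pos_of_neg_of_neg h1 h2
    apply Finset.sum_pos'
    · intro k _
      rcases eq_or_ne k 0 with rfl | hk
      · simp
      · exact (hterm k hk).le
    · exact ⟨1, Finset.mem_univ _, hterm 1 h1ne0⟩
  linarith [hgibbs, hcross, hiden]
end
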